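/- arXiv:2406.00852 — 13 statements merged into one kernel-verified Lean document; each statement's English description precedes it below -/
import Mathlib

section
/- Let T : H → H be nonexpansive with fixed point ξ, D₀ := max{‖x₀ − ξ‖, ‖v − ξ‖}, and x_{k+1} := α_k v + (1 − α_k) T(x_k) with α_k ∈ (0,1). Then for every k ≥ 0, (1/2)‖x_{k+1} − ξ‖² ≤ (1/2)(1 − α_k)‖x_k − ξ‖² + α_k⟨x_k − ξ, v − ξ⟩ + α_k D₀((3/2)D₀ α_k + ‖x_k − T(x_k)‖). -/
/-!
Write `u = v - ξ`, `y = x k - ξ`, `w = T (x k) - ξ`, so that `x (k+1) - ξ = α k • u + (1 - α k) • w`.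
Nonexpansiveness and `T ξ = ξ` give `‖w‖ ≤ ‖y‖`, and by convexity of balls every iterate stays in the
ball of radius `D₀` around `ξ`. Expanding the square, the only delicate term is the cross term
`⟪u, w⟫ = ⟪u, y⟫ - ⟪u, y - w⟫`, whose defect is at most `D₀ ‖x k - T (x k)‖` by Cauchy–Schwarz.
-/

open Metric

open scoped RealInnerProductSpace

theorem norm_halpern_sub_le_max {E : Type*} [NormedAddCommGroup E] [NormedSpace ℝ E]
    {T : E → E} (hT : ∀ x y : E, ‖T x - T y‖ ≤ ‖x - y‖) {ξ v : E} (hξ : T ξ = ξ)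
    {α : ℕ → ℝ} (hα : ∀ k, α k ∈ Set.Icc (0 : ℝ) 1)
    {x : ℕ → E} (hx : ∀ k, x (k + 1) = α k • v + (1 - α k) • T (x k)) (k : ℕ) :
    ‖x k - ξ‖ ≤ max ‖x 0 - ξ‖ ‖v - ξ‖ := by
  set D := max ‖x 0 - ξ‖ ‖v - ξ‖
  suffices x k ∈ closedBall ξ D from mem_closedBall_iff_norm.mp this
  have hv : v ∈ closedBall ξ D := mem_closedBall_iff_norm.mpr (le_max_right _ _)
  induction k with
  | zero => exact mem_closedBall_iff_norm.mpr (le_max_left _ _)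
  | succ k ih =>
    have hTx : T (x k) ∈ closedBall ξ D := by
      rw [mem_closedBall_iff_norm] at ih ⊢
      simpa only [hξ] using (hT (x k) ξ).trans ih
    obtain ⟨ha₀, ha₁⟩ := hα k
    rw [hx k]
    exact convex_closedBall ξ D hv hTx ha₀ (sub_nonneg.mpr ha₁) (add_sub_cancel _ _)

theorem half_norm_sq_smul_add_smul_le {E : Type*} [NormedAddCommGroup E] [InnerProductSpace ℝ E]
    {u y w : E} {a D : ℝ} (ha : a ∈ Set.Icc (0 : ℝ) 1)
    (hu : ‖u‖ ≤ D) (hy : ‖y‖ ≤ D) (hw : ‖w‖ ≤ ‖y‖) :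
    (1 / 2) * ‖a • u + (1 - a) • w‖ ^ 2 ≤
      (1 / 2) * (1 - a) * ‖y‖ ^ 2 + a * ⟪y, u⟫ + a * D * ((3 / 2) * D * a + ‖y - w‖) := by
  obtain ⟨ha₀, ha₁⟩ := ha
  have hb₀ : 0 ≤ 1 - a := sub_nonneg.mpr ha₁
  have hD : 0 ≤ D := (norm_nonneg y).trans hy
  have hexp : ‖a • u + (1 - a) • w‖ ^ 2
      = a ^ 2 * ‖u‖ ^ 2 + 2 * a * (1 - a) * ⟪u, w⟫ + (1 - a) ^ 2 * ‖w‖ ^ 2 := by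
    rw [norm_add_sq_real, norm_smul, norm_smul, real_inner_smul_left, real_inner_smul_right,
      Real.norm_of_nonneg ha₀, Real.norm_of_nonneg hb₀]
    ring
  have hcross : ⟪u, w⟫ ≤ ⟪y, u⟫ + D * ‖y - w‖ := by
    have hsplit : ⟪u, w⟫ = ⟪y, u⟫ - ⟪u, y - w⟫ := by
      rw [inner_sub_right, real_inner_comm u y]; ring
    have := real_inner_le_norm (-u) (y - w)
    rw [inner_neg_left, norm_neg] at this
    nlinarith [mul_le_mul_of_nonneg_right hu (norm_nonneg (y - w))]
  have hyu : -(D * D) ≤ ⟪y, u⟫ := by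
    have := (abs_le.mp (abs_real_inner_le_norm y u)).1
    nlinarith [mul_le_mul hy hu (norm_nonneg u) hD]
  have hu2 : ‖u‖ ^ 2 ≤ D ^ 2 := pow_le_pow_left₀ (norm_nonneg u) hu 2
  have hw2 : ‖w‖ ^ 2 ≤ ‖y‖ ^ 2 := pow_le_pow_left₀ (norm_nonneg w) hw 2
  have hab : 0 ≤ a * (1 - a) := mul_nonneg ha₀ hb₀
  rw [hexp]
  nlinarith [mul_le_mul_of_nonneg_left hu2 (sq_nonneg a),
    mul_le_mul_of_nonneg_left hw2 (sq_nonneg (1 - a)),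
    mul_le_mul_of_nonneg_left hcross hab, mul_le_mul_of_nonneg_left hyu (mul_nonneg ha₀ ha₀),
    mul_nonneg (mul_nonneg ha₀ ha₀) (mul_nonneg hD (norm_nonneg (y - w))),
    mul_nonneg (mul_nonneg hab (sq_nonneg ‖y‖)) ha₀]

theorem stmt3 {H : Type*} [NormedAddCommGroup H] [InnerProductSpace ℝ H]
    (T : H → H) (hT : ∀ x y : H, ‖T x - T y‖ ≤ ‖x - y‖)
    (ξ v : H) (hξ : T ξ = ξ)
    (α : ℕ → ℝ) (hα : ∀ k, α k ∈ Set.Ioo (0:ℝ) 1)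
    (x : ℕ → H) (hx : ∀ k, x (k+1) = α k • v + (1 - α k) • T (x k))
    (D₀ : ℝ) (hD₀ : D₀ = max ‖x 0 - ξ‖ ‖v - ξ‖) :
    ∀ k, (1/2 : ℝ) * ‖x (k+1) - ξ‖^2 ≤
      (1/2) * (1 - α k) * ‖x k - ξ‖^2 + α k * (inner ℝ (x k - ξ) (v - ξ) : ℝ)
        + α k * D₀ * ((3/2) * D₀ * α k + ‖x k - T (x k)‖) := by
  intro k
  have hα' : ∀ k, α k ∈ Set.Icc (0 : ℝ) 1 := fun k => Set.Ioo_subset_Icc_self (hα k)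
  have hstep : x (k + 1) - ξ = α k • (v - ξ) + (1 - α k) • (T (x k) - ξ) := by
    rw [hx k, smul_sub, smul_sub]; module
  have hres : x k - T (x k) = (x k - ξ) - (T (x k) - ξ) := (sub_sub_sub_cancel_right _ _ _).symm
  have hTx : ‖T (x k) - ξ‖ ≤ ‖x k - ξ‖ := by simpa only [hξ] using hT (x k) ξ
  rw [hstep, hres]
  refine half_norm_sq_smul_add_smul_le (hα' k) (hD₀ ▸ le_max_right _ _) ?_ hTx
  exact hD₀ ▸ norm_halpern_sub_le_max hT hξ hα' hx k
end

section
/- Let T : H → H be nonexpansive with fixed point ξ, D₀ := max{‖x₀ − ξ‖, ‖v − ξ‖}, and x_{k+1} := α_k v + (1 − α_k) T(x_k) with α_k ∈ (0,1). Then for every k ≥ 1, ‖x_{k+1} − x_k‖ ≤ (1 − α_k)‖x_k − x_{k−1}‖ + 2 D₀ |α_k − α_{k−1}|. -/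
theorem stmt4 {H : Type*} [NormedAddCommGroup H] [InnerProductSpace ℝ H]
    (T : H → H) (hT : ∀ x y : H, ‖T x - T y‖ ≤ ‖x - y‖)
    (ξ v : H) (hξ : T ξ = ξ)
    (α : ℕ → ℝ) (hα : ∀ k, α k ∈ Set.Ioo (0:ℝ) 1)
    (x : ℕ → H) (hx : ∀ k, x (k+1) = α k • v + (1 - α k) • T (x k))
    (D₀ : ℝ) (hD₀ : D₀ = max ‖x 0 - ξ‖ ‖v - ξ‖) :
    ∀ k, 1 ≤ k →
      ‖x (k+1) - x k‖ ≤ (1 - α k) * ‖x k - x (k-1)‖ + 2 * D₀ * |α k - α (k-1)| := by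
  have hvD : ‖v - ξ‖ ≤ D₀ := by rw [hD₀]; exact le_max_right _ _
  have hbound : ∀ k, ‖x k - ξ‖ ≤ D₀ := by
    intro k
    induction k with
    | zero => rw [hD₀]; exact le_max_left _ _
    | succ n ih =>
      obtain ⟨h0, h1⟩ := hα n
      have hxn : x (n+1) - ξ = α n • (v - ξ) + (1 - α n) • (T (x n) - ξ) := by
        rw [hx n, ← hξ]; module
      calc ‖x (n+1) - ξ‖ ≤ ‖α n • (v - ξ)‖ + ‖(1 - α n) • (T (x n) - ξ)‖ := by
            rw [hxn]; exact norm_add_le _ _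
        _ = α n * ‖v - ξ‖ + (1 - α n) * ‖T (x n) - ξ‖ := by
            rw [norm_smul, norm_smul, Real.norm_of_nonneg h0.le,
              Real.norm_of_nonneg (by linarith)]
        _ ≤ α n * D₀ + (1 - α n) * D₀ := by
            have hT' : ‖T (x n) - ξ‖ ≤ D₀ := by
              calc ‖T (x n) - ξ‖ = ‖T (x n) - T ξ‖ := by rw [hξ]
                _ ≤ ‖x n - ξ‖ := hT _ _
                _ ≤ D₀ := ih
            have := mul_le_mul_of_nonneg_left hvD h0.le
            have := mul_le_mul_of_nonneg_left hT' (by linarith : (0:ℝ) ≤ 1 - α n)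
            linarith
        _ = D₀ := by ring
  intro k hk
  obtain ⟨m, rfl⟩ := Nat.exists_eq_add_of_le hk
  simp only [Nat.add_sub_cancel_left] at *
  set k := 1 + m with hkdef
  have hm : k - 1 = m := by omega
  obtain ⟨h0, h1⟩ := hα k
  have hkey : x (k+1) - x k = (1 - α k) • (T (x k) - T (x m)) + (α k - α m) • (v - T (x m)) := by
    have hxk : x k = α m • v + (1 - α m) • T (x m) := by
      have : k = m + 1 := by omega
      rw [this]; exact hx m
    rw [hx k, hxk]; module
  have hvT : ‖v - T (x m)‖ ≤ 2 * D₀ := by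
    calc ‖v - T (x m)‖ ≤ ‖v - ξ‖ + ‖ξ - T (x m)‖ := by simpa [dist_eq_norm] using dist_triangle v ξ (T (x m))
      _ ≤ D₀ + D₀ := by
          refine add_le_add hvD ?_
          rw [norm_sub_rev]
          calc ‖T (x m) - ξ‖ = ‖T (x m) - T ξ‖ := by rw [hξ]
            _ ≤ ‖x m - ξ‖ := hT _ _
            _ ≤ D₀ := hbound m
      _ = 2 * D₀ := by ring
  calc ‖x (k+1) - x k‖ ≤ ‖(1 - α k) • (T (x k) - T (x m))‖ + ‖(α k - α m) • (v - T (x m))‖ := by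
        rw [hkey]; exact norm_add_le _ _
    _ = (1 - α k) * ‖T (x k) - T (x m)‖ + |α k - α m| * ‖v - T (x m)‖ := by
        rw [norm_smul, norm_smul, Real.norm_of_nonneg (by linarith), Real.norm_eq_abs]
    _ ≤ (1 - α k) * ‖x k - x m‖ + |α k - α m| * (2 * D₀) := by
        refine add_le_add (mul_le_mul_of_nonneg_left (hT _ _) (by linarith))
          (mul_le_mul_of_nonneg_left hvT (abs_nonneg _))
    _ = (1 - α k) * ‖x k - x m‖ + 2 * D₀ * |α k - α m| := by ring
end

section
/- Let T : H → H be nonexpansive with fixed point ξ, D₀ := max{‖x₀ − ξ‖, ‖v − ξ‖}, and x_{k+1} := α_k v + (1 − α_k) T(x_k) with α_k ∈ (0,1). Then for every k ≥ 1, ‖x_{k+1} − T(x_{k+1})‖ ≤ (1 − α_k)‖x_{k+1} − x_k‖ + 2 D₀ α_k. -/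
/-!
Each Halpern step `x (k+1) - ξ = α k • (v - ξ) + (1 - α k) • (T (x k) - ξ)` is a convex
combination of vectors of norm at most `D₀`, so the whole orbit stays in the ball of radius
`D₀` around the fixed point `ξ`. The residual then splits the same way,
`x (k+1) - T (x (k+1)) = α k • (v - T (x (k+1))) + (1 - α k) • (T (x k) - T (x (k+1)))`,
where the first vector has norm at most `‖v - ξ‖ + ‖x (k+1) - ξ‖ ≤ 2 D₀` and the second at
most `‖x (k+1) - x k‖` by nonexpansiveness.
-/

section Halpern

variable {E : Type*} [SeminormedAddCommGroup E]

theorem norm_sub_fixedPoint_le {T : E → E} (hT : ∀ x y, ‖T x - T y‖ ≤ ‖x - y‖)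
    {ξ : E} (hξ : T ξ = ξ) (x : E) : ‖T x - ξ‖ ≤ ‖x - ξ‖ := by
  simpa only [hξ] using hT x ξ

variable [NormedSpace ℝ E]

theorem norm_smul_add_one_sub_smul_le {a : ℝ} (ha₀ : 0 ≤ a) (ha₁ : a ≤ 1) (u w : E) :
    ‖a • u + (1 - a) • w‖ ≤ a * ‖u‖ + (1 - a) * ‖w‖ :=
  convexOn_univ_norm.2 trivial trivial ha₀ (sub_nonneg.2 ha₁) (add_sub_cancel a 1)

theorem halpern_norm_sub_fixedPoint_le {T : E → E} (hT : ∀ x y, ‖T x - T y‖ ≤ ‖x - y‖)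
    {ξ : E} (hξ : T ξ = ξ) {v : E} {α : ℕ → ℝ} (hα : ∀ k, α k ∈ Set.Icc (0 : ℝ) 1)
    {x : ℕ → E} (hx : ∀ k, x (k + 1) = α k • v + (1 - α k) • T (x k)) :
    ∀ n, ‖x n - ξ‖ ≤ max ‖x 0 - ξ‖ ‖v - ξ‖
  | 0 => le_max_left _ _
  | n + 1 => by
    obtain ⟨hα₀, hα₁⟩ := hα n
    have hstep : x (n + 1) - ξ = α n • (v - ξ) + (1 - α n) • (T (x n) - ξ) := by
      rw [hx n]; module
    calc ‖x (n + 1) - ξ‖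
        ≤ α n * ‖v - ξ‖ + (1 - α n) * ‖T (x n) - ξ‖ := by
          rw [hstep]; exact norm_smul_add_one_sub_smul_le hα₀ hα₁ _ _
      _ ≤ α n * max ‖x 0 - ξ‖ ‖v - ξ‖ + (1 - α n) * max ‖x 0 - ξ‖ ‖v - ξ‖ := by
          gcongr
          · exact le_max_right _ _
          · exact (norm_sub_fixedPoint_le hT hξ _).trans
              (halpern_norm_sub_fixedPoint_le hT hξ hα hx n)
      _ = max ‖x 0 - ξ‖ ‖v - ξ‖ := by ring

theorem halpern_norm_sub_apply_le {T : E → E} (hT : ∀ x y, ‖T x - T y‖ ≤ ‖x - y‖)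
    {ξ : E} (hξ : T ξ = ξ) {v : E} {α : ℕ → ℝ} (hα : ∀ k, α k ∈ Set.Icc (0 : ℝ) 1)
    {x : ℕ → E} (hx : ∀ k, x (k + 1) = α k • v + (1 - α k) • T (x k)) (k : ℕ) :
    ‖x (k + 1) - T (x (k + 1))‖
      ≤ (1 - α k) * ‖x (k + 1) - x k‖ + 2 * max ‖x 0 - ξ‖ ‖v - ξ‖ * α k := by
  set D := max ‖x 0 - ξ‖ ‖v - ξ‖
  obtain ⟨hα₀, hα₁⟩ := hα k
  have hsplit : x (k + 1) - T (x (k + 1)) =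
      α k • (v - T (x (k + 1))) + (1 - α k) • (T (x k) - T (x (k + 1))) := by
    rw [hx k]; module
  have hanchor : ‖v - T (x (k + 1))‖ ≤ 2 * D :=
    calc ‖v - T (x (k + 1))‖ ≤ ‖v - ξ‖ + ‖T (x (k + 1)) - ξ‖ := by
          simpa only [dist_eq_norm] using dist_triangle_right v (T (x (k + 1))) ξ
      _ ≤ D + D := add_le_add (le_max_right _ _) ((norm_sub_fixedPoint_le hT hξ _).trans
          (halpern_norm_sub_fixedPoint_le hT hξ hα hx _))
      _ = 2 * D := by ring
  calc ‖x (k + 1) - T (x (k + 1))‖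
      ≤ α k * ‖v - T (x (k + 1))‖ + (1 - α k) * ‖T (x k) - T (x (k + 1))‖ := by
        rw [hsplit]; exact norm_smul_add_one_sub_smul_le hα₀ hα₁ _ _
    _ ≤ α k * (2 * D) + (1 - α k) * ‖x k - x (k + 1)‖ := by
        gcongr
        exact hT _ _
    _ = (1 - α k) * ‖x (k + 1) - x k‖ + 2 * D * α k := by
        rw [norm_sub_rev]; ring

end Halpern

theorem stmt5 {H : Type*} [NormedAddCommGroup H] [InnerProductSpace ℝ H]
    (T : H → H) (hT : ∀ x y : H, ‖T x - T y‖ ≤ ‖x - y‖)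
    (ξ v : H) (hξ : T ξ = ξ)
    (α : ℕ → ℝ) (hα : ∀ k, α k ∈ Set.Ioo (0:ℝ) 1)
    (x : ℕ → H) (hx : ∀ k, x (k+1) = α k • v + (1 - α k) • T (x k))
    (D₀ : ℝ) (hD₀ : D₀ = max ‖x 0 - ξ‖ ‖v - ξ‖) :
    ∀ k, 1 ≤ k →
      ‖x (k+1) - T (x (k+1))‖ ≤ (1 - α k) * ‖x (k+1) - x k‖ + 2 * D₀ * α k := by
  intro k _
  subst hD₀
  exact halpern_norm_sub_apply_le hT hξ (fun k => Set.Ioo_subset_Icc_self (hα k)) hx k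
end

section
/- Let T : H → H be nonexpansive with Fix T nonempty, let α_k ∈ (0,1) satisfy α_k → 0 and Σ α_k = +∞, and let x_{k+1} := α_k v + (1 − α_k) T(x_k). If ‖x_k − T(x_k)‖ → 0 as k → +∞, then x_k converges strongly to P_{Fix T}(v), the projection of v onto the set of fixed points of T. -/
open Filter Topology
open scoped RealInnerProductSpace

section aux
variable {H : Type*} [NormedAddCommGroup H] [InnerProductSpace ℝ H]

lemma sq_ineq' (u w : H) : ‖u + w‖^2 ≤ ‖w‖^2 + 2 * ⟪u, u + w⟫ := by
  have h := norm_add_sq_real u w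
  have h2 : ⟪u, u + w⟫ = ‖u‖^2 + ⟪u, w⟫ := by
    rw [inner_add_right, real_inner_self_eq_norm_sq]
  nlinarith [sq_nonneg ‖u‖]

lemma mono_ineq' (T : H → H) (hT : ∀ x y : H, ‖T x - T y‖ ≤ ‖x - y‖) (a b : H) :
    0 ≤ ⟪(a - T a) - (b - T b), a - b⟫ := by
  have he : (a - T a) - (b - T b) = (a - b) - (T a - T b) := by abel
  rw [he, inner_sub_left, real_inner_self_eq_norm_sq]
  nlinarith [real_inner_le_norm (T a - T b) (a - b), hT a b, norm_nonneg (a - b),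
    norm_nonneg (T a - T b)]

end aux

lemma xu_lemma (α b s : ℕ → ℝ) (hα : ∀ k, α k ∈ Set.Ioo (0:ℝ) 1)
    (hdiv : Tendsto (fun n => ∑ i ∈ Finset.range n, α i) atTop atTop)
    (hs : ∀ k, 0 ≤ s k)
    (hrec : ∀ k, s (k+1) ≤ (1 - α k) * s k + α k * b k)
    (hb : ∀ ε > 0, ∀ᶠ k in atTop, b k ≤ ε) :
    Tendsto s atTop (𝓝 0) := by
  rw [Metric.tendsto_atTop]
  intro ε hε
  obtain ⟨N, hN⟩ := (hb (ε/2) (by linarith)).exists_forall_of_atTop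
  set P : ℕ → ℝ := fun j => ∏ i ∈ Finset.range j, (1 - α (N+i)) with hP
  have hPnn : ∀ j, 0 ≤ P j := by
    intro j
    apply Finset.prod_nonneg
    intro i _
    have := hα (N+i)
    simp only [Set.mem_Ioo] at this
    linarith [this.2]
  have key : ∀ j, s (N+j) ≤ ε/2 + P j * s N := by
    intro j
    induction j with
    | zero => simp [hP]; linarith [hs N]
    | succ j ih =>
      have h1 := hrec (N+j)
      have h2 := hN (N+j) (Nat.le_add_right N j)
      have hαj := hα (N+j)
      simp only [Set.mem_Ioo] at hαj
      have hPsucc : P (j+1) = P j * (1 - α (N+j)) := Finset.prod_range_succ _ _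
      have hNj : N + (j+1) = (N+j) + 1 := by omega
      rw [hNj, hPsucc]
      nlinarith [hPnn j, hs (N+j), hs N]
  have hPexp : ∀ j, P j ≤ Real.exp (-(∑ i ∈ Finset.range j, α (N+i))) := by
    intro j
    calc P j ≤ ∏ i ∈ Finset.range j, Real.exp (-(α (N+i))) := by
          apply Finset.prod_le_prod
          · intro i _
            have := hα (N+i); simp only [Set.mem_Ioo] at this; linarith [this.2]
          · intro i _
            have h := Real.add_one_le_exp (-(α (N+i)))
            linarith
      _ = Real.exp (∑ i ∈ Finset.range j, -(α (N+i))) := (Real.exp_sum _ _).symm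
      _ = Real.exp (-(∑ i ∈ Finset.range j, α (N+i))) := by rw [← Finset.sum_neg_distrib]
  have hsum : Tendsto (fun j => ∑ i ∈ Finset.range j, α (N+i)) atTop atTop := by
    have heq : ∀ j, ∑ i ∈ Finset.range j, α (N+i)
        = (∑ i ∈ Finset.range (N+j), α i) - ∑ i ∈ Finset.range N, α i := by
      intro j
      rw [Finset.sum_range_add]
      ring
    rw [show (fun j => ∑ i ∈ Finset.range j, α (N+i)) = _ from funext heq]
    apply Filter.tendsto_atTop_add_const_right
    exact hdiv.comp (tendsto_add_atTop_nat N |>.congr (by intro j; simp [Nat.add_comm]))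
  have hPz : Tendsto (fun j => P j * s N) atTop (𝓝 0) := by
    have h1 : Tendsto (fun j => Real.exp (-(∑ i ∈ Finset.range j, α (N+i)))) atTop (𝓝 0) :=
      Real.tendsto_exp_atBot.comp (tendsto_neg_atTop_atBot.comp hsum)
    have h2 := squeeze_zero hPnn hPexp h1
    simpa using h2.mul_const (s N)
  obtain ⟨J, hJ⟩ := (Metric.tendsto_atTop.mp hPz (ε/2) (by linarith))
  refine ⟨N + J, fun n hn => ?_⟩
  obtain ⟨j, rfl⟩ : ∃ j, n = N + j := ⟨n - N, by omega⟩
  have hj : J ≤ j := by omega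
  have := hJ j hj
  rw [Real.dist_eq, sub_zero] at this ⊢
  have h3 := key j
  rw [abs_of_nonneg (hs _)]
  have h4 : P j * s N < ε/2 := by
    calc P j * s N ≤ |P j * s N| := le_abs_self _
    _ < ε/2 := this
  linarith

lemma browder_exists {H : Type*} [NormedAddCommGroup H] [InnerProductSpace ℝ H]
    [CompleteSpace H] (T : H → H) (hT : ∀ x y : H, ‖T x - T y‖ ≤ ‖x - y‖) (v : H) (n : ℕ) :
    ∃ u : H, u = (1/((n:ℝ)+2)) • v + (1 - 1/((n:ℝ)+2)) • T u := by
  set t : ℝ := 1/((n:ℝ)+2) with ht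
  have hn2 : (0:ℝ) < (n:ℝ)+2 := by positivity
  have ht0 : 0 < t := by positivity
  have ht1 : t < 1 := by
    rw [ht, div_lt_one hn2]; linarith
  set K : NNReal := ⟨1 - t, by linarith⟩ with hK
  have hKlt : K < 1 := by
    rw [← NNReal.coe_lt_coe, hK]; show (1:ℝ) - t < 1; linarith
  have hL : LipschitzWith K (fun y : H => t • v + (1 - t) • T y) := by
    apply LipschitzWith.of_dist_le_mul
    intro a b
    simp only [dist_eq_norm]
    have he : (t • v + (1 - t) • T a) - (t • v + (1 - t) • T b) = (1-t) • (T a - T b) := by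
      module
    rw [he, norm_smul, Real.norm_of_nonneg (by linarith : (0:ℝ) ≤ 1 - t)]
    have : (K : ℝ) = 1 - t := rfl
    rw [this]
    exact mul_le_mul_of_nonneg_left (hT a b) (by linarith)
  have hC : ContractingWith K (fun y : H => t • v + (1 - t) • T y) := ⟨hKlt, hL⟩
  exact ⟨hC.fixedPoint _, (hC.fixedPoint_isFixedPt).symm⟩

set_option maxHeartbeats 2000000 in
theorem stmt6 {H : Type*} [NormedAddCommGroup H] [InnerProductSpace ℝ H] [CompleteSpace H]
    (T : H → H) (hT : ∀ x y : H, ‖T x - T y‖ ≤ ‖x - y‖)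
    (hfix : (Function.fixedPoints T).Nonempty)
    (v : H) (α : ℕ → ℝ) (hα : ∀ k, α k ∈ Set.Ioo (0:ℝ) 1)
    (hα0 : Tendsto α atTop (nhds 0)) (hαs : ¬ Summable α)
    (x : ℕ → H) (hx : ∀ k, x (k+1) = α k • v + (1 - α k) • T (x k))
    (hres : Tendsto (fun k => ‖x k - T (x k)‖) atTop (nhds 0)) :
    ∃ ξ ∈ Function.fixedPoints T,
      (∀ w ∈ Function.fixedPoints T, ‖v - ξ‖ ≤ ‖v - w‖) ∧
      Tendsto x atTop (nhds ξ) := by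
  obtain ⟨p, hp⟩ := hfix
  have hTp : T p = p := hp
  choose u hu using browder_exists T hT v
  set t : ℕ → ℝ := fun n => 1/((n:ℝ)+2) with htdef
  have ht0 : ∀ n, 0 < t n := fun n => by positivity
  have ht1 : ∀ n, t n < 1 := fun n => by
    rw [htdef]; simp only; rw [div_lt_one (by positivity)]
    have : (0:ℝ) ≤ (n:ℝ) := Nat.cast_nonneg n
    linarith
  -- key scalar relation:  v - u n = (n+1) • (u n - T (u n))
  have hrel : ∀ n, v - u n = ((n:ℝ)+1) • (u n - T (u n)) := by
    intro n
    have h1 : u n - T (u n) = t n • (v - T (u n)) := by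
      nth_rewrite 1 [hu n]; simp only [htdef]; module
    have h2 : v - u n = (1 - t n) • (v - T (u n)) := by
      nth_rewrite 1 [hu n]; simp only [htdef]; module
    rw [h2, h1, smul_smul]
    congr 1
    rw [htdef]
    have hn2 : ((n:ℝ)+2) ≠ 0 := by positivity
    field_simp
    ring
  -- (A) inequality against fixed points
  have hAle : ∀ n, ∀ w : H, T w = w → ‖u n - w‖^2 ≤ ⟪v - w, u n - w⟫ := by
    intro n w hw
    have h1 : u n - w = t n • (v - w) + (1 - t n) • (T (u n) - w) := by
      nth_rewrite 1 [hu n]; simp only [htdef]; module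
    have h2 : ⟪u n - w, u n - w⟫
        = t n * ⟪v - w, u n - w⟫ + (1 - t n) * ⟪T (u n) - w, u n - w⟫ := by
      nth_rewrite 1 [h1]
      rw [inner_add_left, real_inner_smul_left, real_inner_smul_left]
    have h3 : ⟪T (u n) - w, u n - w⟫ ≤ ‖u n - w‖^2 := by
      have h4 := real_inner_le_norm (T (u n) - w) (u n - w)
      have h5 : ‖T (u n) - w‖ ≤ ‖u n - w‖ := by
        have := hT (u n) w; rwa [hw] at this
      nlinarith [norm_nonneg (u n - w)]
    have h6 : ⟪u n - w, u n - w⟫ = ‖u n - w‖^2 := real_inner_self_eq_norm_sq _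
    nlinarith [ht0 n, ht1 n]
  have hAnorm : ∀ n, ∀ w : H, T w = w → ‖u n - w‖ ≤ ‖v - w‖ := by
    intro n w hw
    have h1 := hAle n w hw
    have h2 := real_inner_le_norm (v - w) (u n - w)
    nlinarith [norm_nonneg (u n - w), norm_nonneg (v - w)]
  -- (B) monotonicity of φ n = ‖v - u n‖²  and Cauchy estimate
  have hB : ∀ m n : ℕ, m ≤ n →
      ‖v - u m‖^2 ≤ ‖v - u n‖^2 ∧ ‖u n - u m‖^2 ≤ ‖v - u n‖^2 - ‖v - u m‖^2 := by
    intro m n hmn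
    rcases eq_or_lt_of_le hmn with rfl | hlt
    · constructor
      · exact le_rfl
      · simp
    · set a := v - u n with ha
      set bb := v - u m with hbb
      set lam : ℝ := (n:ℝ)+1 with hlam
      set mu : ℝ := (m:ℝ)+1 with hmu
      have hlam0 : 0 < lam := by positivity
      have hmu0 : 0 < mu := by positivity
      have hgap : mu + 1 ≤ lam := by
        rw [hlam, hmu]
        have : (m:ℝ) + 1 ≤ (n:ℝ) := by exact_mod_cast Nat.succ_le_of_lt hlt
        linarith
      have han : a = lam • (u n - T (u n)) := hrel n
      have hbm : bb = mu • (u m - T (u m)) := hrel m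
      have hba : u n - u m = bb - a := by rw [ha, hbb]; abel
      have hsm : mu • a - lam • bb = (lam*mu) • ((u n - T (u n)) - (u m - T (u m))) := by
        rw [han, hbm]; module
      have h7 : 0 ≤ ⟪mu • a - lam • bb, bb - a⟫ := by
        rw [hsm, ← hba, real_inner_smul_left]
        exact mul_nonneg (by positivity) (mono_ineq' T hT (u n) (u m))
      have h8 : ⟪mu • a - lam • bb, bb - a⟫
          = mu * (⟪a, bb⟫ - ‖a‖^2) - lam * (‖bb‖^2 - ⟪a, bb⟫) := by
        simp only [inner_sub_left, inner_sub_right, real_inner_smul_left,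
          real_inner_self_eq_norm_sq, real_inner_comm bb a]
        try ring
      rw [h8] at h7
      have hnm : ‖u n - u m‖^2 = ‖a‖^2 + ‖bb‖^2 - 2*⟪a, bb⟫ := by
        rw [hba, norm_sub_sq_real, real_inner_comm a bb]
        ring
      have hinab := real_inner_le_norm a bb
      have hfirst : ‖bb‖^2 ≤ ‖a‖^2 := by
        nlinarith [sq_nonneg (‖a‖ - ‖bb‖), norm_nonneg a, norm_nonneg bb]
      constructor
      · exact hfirst
      · nlinarith [norm_nonneg a, norm_nonneg bb]
  -- limit of the path
  set φ : ℕ → ℝ := fun n => ‖v - u n‖^2 with hφ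
  have hφmono : Monotone φ := fun m n h => (hB m n h).1
  have hvu : ∀ n, ‖v - u n‖ ≤ 2*‖v - p‖ := by
    intro n
    have e1 : v - u n = (v - p) + (p - u n) := by abel
    calc ‖v - u n‖ = ‖(v - p) + (p - u n)‖ := by rw [← e1]
    _ ≤ ‖v - p‖ + ‖p - u n‖ := norm_add_le _ _
    _ ≤ ‖v - p‖ + ‖v - p‖ := by
        have : ‖p - u n‖ = ‖u n - p‖ := norm_sub_rev _ _
        rw [this]
        linarith [hAnorm n p hTp]
    _ = 2*‖v - p‖ := by ring
  have hφbdd : ∀ n, φ n ≤ (2*‖v - p‖)^2 := by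
    intro n
    rw [hφ]
    exact pow_le_pow_left₀ (norm_nonneg _) (hvu n) 2
  have hφtend : Tendsto φ atTop (𝓝 (⨆ n, φ n)) := by
    apply tendsto_atTop_ciSup hφmono
    exact ⟨(2*‖v - p‖)^2, by rintro y ⟨n, rfl⟩; exact hφbdd n⟩
  have hucauchy : CauchySeq u := by
    rw [Metric.cauchySeq_iff]
    intro ε hε
    obtain ⟨N, hN⟩ := Metric.cauchySeq_iff.mp hφtend.cauchySeq (ε^2) (by positivity)
    refine ⟨N, fun m hm n hn => ?_⟩
    have key : ∀ i j, N ≤ i → N ≤ j → i ≤ j → dist (u i) (u j) < ε := by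
      intro i j hi hj hij
      have h1 := (hB i j hij).2
      have h2 := hN j hj i hi
      rw [Real.dist_eq] at h2
      have h3 : φ j - φ i < ε^2 := lt_of_le_of_lt (le_abs_self _) h2
      have h4 : ‖u j - u i‖^2 < ε^2 := lt_of_le_of_lt h1 h3
      rw [dist_eq_norm, norm_sub_rev]
      nlinarith [norm_nonneg (u j - u i)]
    rcases le_total m n with h | h
    · exact key m n hm hn h
    · rw [dist_comm]; exact key n m hn hm h
  obtain ⟨ξ, hξ⟩ := cauchySeq_tendsto_of_complete hucauchy
  -- ξ is a fixed point
  have hres0 : Tendsto (fun n => u n - T (u n)) atTop (𝓝 0) := by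
    have hbound : ∀ n : ℕ, ‖u n - T (u n)‖ ≤ ((n:ℝ)+1)⁻¹ * (2*‖v - p‖) := by
      intro n
      have h1 : u n - T (u n) = ((n:ℝ)+1)⁻¹ • (v - u n) := by
        rw [hrel n, smul_smul, inv_mul_cancel₀ (by positivity : ((n:ℝ)+1) ≠ 0), one_smul]
      rw [h1, norm_smul, Real.norm_of_nonneg (by positivity : (0:ℝ) ≤ ((n:ℝ)+1)⁻¹)]
      exact mul_le_mul_of_nonneg_left (hvu n) (by positivity)
    refine squeeze_zero_norm hbound ?_
    · have h2 : Tendsto (fun n : ℕ => ((n:ℝ)+1)⁻¹) atTop (𝓝 0) := by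
        apply tendsto_inv_atTop_zero.comp
        exact tendsto_atTop_add_const_right atTop 1 tendsto_natCast_atTop_atTop
      simpa using h2.mul_const (2*‖v - p‖)
  have hTcont : Continuous T := by
    have h1 : LipschitzWith 1 T := by
      apply LipschitzWith.of_dist_le_mul
      intro a bq
      simp only [dist_eq_norm, NNReal.coe_one, one_mul]
      exact hT a bq
    exact h1.continuous
  have hTu : Tendsto (fun n => T (u n)) atTop (𝓝 ξ) := by
    have h1 := hξ.sub hres0
    rw [sub_zero] at h1
    exact h1.congr (fun n => by abel)
  have hTξ : T ξ = ξ := tendsto_nhds_unique ((hTcont.tendsto ξ).comp hξ) hTu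
  -- ξ is the projection of v
  have hproj : ∀ w : H, T w = w → ‖ξ - w‖^2 ≤ ⟪v - w, ξ - w⟫ := by
    intro w hw
    have l1 : Tendsto (fun n => ‖u n - w‖^2) atTop (𝓝 (‖ξ - w‖^2)) :=
      ((hξ.sub tendsto_const_nhds).norm).pow 2
    have l2 : Tendsto (fun n => ⟪v - w, u n - w⟫) atTop (𝓝 ⟪v - w, ξ - w⟫) :=
      Tendsto.inner tendsto_const_nhds (hξ.sub tendsto_const_nhds)
    exact le_of_tendsto_of_tendsto' l1 l2 (fun n => hAle n w hw)
  have hmin : ∀ w : H, T w = w → ‖v - ξ‖ ≤ ‖v - w‖ := by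
    intro w hw
    have h1 := hproj w hw
    have e1 : ‖v - w‖^2 = ‖v - ξ‖^2 + 2*⟪v - ξ, ξ - w⟫ + ‖ξ - w‖^2 := by
      have e : v - w = (v - ξ) + (ξ - w) := by abel
      rw [e, norm_add_sq_real]
    have e2 : ⟪v - ξ, ξ - w⟫ = ⟪v - w, ξ - w⟫ - ‖ξ - w‖^2 := by
      have e : v - ξ = (v - w) - (ξ - w) := by abel
      rw [e, inner_sub_left, real_inner_self_eq_norm_sq]
    nlinarith [norm_nonneg (v - ξ), norm_nonneg (v - w), sq_nonneg (‖ξ - w‖)]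
  -- boundedness of the iterates
  set M0 : ℝ := max ‖x 0 - p‖ ‖v - p‖ with hM0
  have hM0nn : 0 ≤ M0 := le_trans (norm_nonneg _) (le_max_left _ _)
  have hxb : ∀ k, ‖x k - p‖ ≤ M0 := by
    intro k
    induction k with
    | zero => exact le_max_left _ _
    | succ k ih =>
      have hαk := hα k
      simp only [Set.mem_Ioo] at hαk
      have e : x (k+1) - p = α k • (v - p) + (1 - α k) • (T (x k) - p) := by
        rw [hx k]; module
      have h5 : ‖T (x k) - p‖ ≤ ‖x k - p‖ := by
        have := hT (x k) p; rwa [hTp] at this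
      have h6 : ‖v - p‖ ≤ M0 := le_max_right _ _
      calc ‖x (k+1) - p‖ = ‖α k • (v - p) + (1 - α k) • (T (x k) - p)‖ := by rw [e]
      _ ≤ ‖α k • (v - p)‖ + ‖(1 - α k) • (T (x k) - p)‖ := norm_add_le _ _
      _ = α k * ‖v - p‖ + (1 - α k) * ‖T (x k) - p‖ := by
          rw [norm_smul, norm_smul, Real.norm_of_nonneg hαk.1.le,
            Real.norm_of_nonneg (by linarith)]
      _ ≤ α k * M0 + (1 - α k) * M0 :=
          add_le_add (mul_le_mul_of_nonneg_left h6 hαk.1.le)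
            (mul_le_mul_of_nonneg_left (le_trans h5 ih) (by linarith))
      _ = M0 := by ring
  set M2 : ℝ := M0 + ‖v - p‖ with hM2def
  have hM2nn : 0 ≤ M2 := by positivity
  have hM2 : ∀ k n, ‖x k - u n‖ ≤ M2 := by
    intro k n
    have e1 : x k - u n = (x k - p) + (p - u n) := by abel
    calc ‖x k - u n‖ = ‖(x k - p) + (p - u n)‖ := by rw [← e1]
    _ ≤ ‖x k - p‖ + ‖p - u n‖ := norm_add_le _ _
    _ ≤ M0 + ‖v - p‖ := by
        have h1 : ‖p - u n‖ = ‖u n - p‖ := norm_sub_rev _ _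
        rw [h1]
        exact add_le_add (hxb k) (hAnorm n p hTp)
  set M1 : ℝ := M0 + ‖p - ξ‖ with hM1def
  have hM1 : ∀ k, ‖x k - ξ‖ ≤ M1 := by
    intro k
    have e1 : x k - ξ = (x k - p) + (p - ξ) := by abel
    calc ‖x k - ξ‖ = ‖(x k - p) + (p - ξ)‖ := by rw [← e1]
    _ ≤ ‖x k - p‖ + ‖p - ξ‖ := norm_add_le _ _
    _ ≤ M1 := add_le_add (hxb k) le_rfl
  have huξ : ∀ n, ‖u n - ξ‖ ≤ ‖v - p‖ + ‖p - ξ‖ := by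
    intro n
    have e1 : u n - ξ = (u n - p) + (p - ξ) := by abel
    calc ‖u n - ξ‖ = ‖(u n - p) + (p - ξ)‖ := by rw [← e1]
    _ ≤ ‖u n - p‖ + ‖p - ξ‖ := norm_add_le _ _
    _ ≤ ‖v - p‖ + ‖p - ξ‖ := add_le_add (hAnorm n p hTp) le_rfl
  -- the limsup estimate
  have climsup : ∀ ε : ℝ, 0 < ε → ∀ᶠ k in atTop, ⟪v - ξ, x k - ξ⟫ ≤ ε := by
    intro ε hε
    set C : ℝ := 2*‖v - p‖ + M2 + (‖v - p‖ + ‖p - ξ‖) with hCdef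
    have htt : Tendsto (fun n => t n * M2^2) atTop (𝓝 0) := by
      have h2 : Tendsto (fun n : ℕ => ((n:ℝ)+2)⁻¹) atTop (𝓝 0) := by
        apply tendsto_inv_atTop_zero.comp
        exact tendsto_atTop_add_const_right atTop 2 tendsto_natCast_atTop_atTop
      have h3 := h2.mul_const (M2^2)
      rw [zero_mul] at h3
      exact h3.congr (fun n => by rw [htdef]; simp only; rw [one_div])
    have hut : Tendsto (fun n => ‖u n - ξ‖ * C) atTop (𝓝 0) := by
      have h1 := ((hξ.sub (tendsto_const_nhds : Tendsto (fun _ : ℕ => ξ) atTop _)).norm).mul_const C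
      simpa using h1
    have h1ev : ∀ᶠ n in atTop, t n * M2^2 < 2*ε/3 := htt.eventually_lt_const (by linarith)
    have h2ev : ∀ᶠ n in atTop, ‖u n - ξ‖ * C < ε/3 := hut.eventually_lt_const (by linarith)
    obtain ⟨n, hn1, hn2⟩ := (h1ev.and h2ev).exists
    set δ : ℝ := min 1 (2*(t n)*(ε/3)/(2*M2+1)) with hδdef
    have hδpos : 0 < δ := lt_min (by norm_num) (by positivity)
    have hev : ∀ᶠ k in atTop, ‖x k - T (x k)‖ < δ := hres.eventually_lt_const hδpos
    filter_upwards [hev] with k hk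
    set e : ℝ := ‖x k - T (x k)‖ with hedef
    set d : ℝ := ‖u n - x k‖ with hddef
    have hd0 : 0 ≤ d := norm_nonneg _
    have he0 : 0 ≤ e := norm_nonneg _
    have hdM : d ≤ M2 := by rw [hddef, norm_sub_rev]; exact hM2 k n
    have htn := ht0 n
    have htn1 := ht1 n
    -- core inequality
    have h1' : u n - x k = t n • (v - x k) + (1 - t n) • (T (u n) - x k) := by
      nth_rewrite 1 [hu n]; simp only [htdef]; module
    have h2' := sq_ineq' (t n • (v - x k)) ((1 - t n) • (T (u n) - x k))
    rw [← h1'] at h2'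
    have h3' : ‖(1 - t n) • (T (u n) - x k)‖ = (1 - t n) * ‖T (u n) - x k‖ := by
      rw [norm_smul, Real.norm_of_nonneg (by linarith)]
    have h4' : ‖T (u n) - x k‖ ≤ d + e := by
      have e1 : T (u n) - x k = (T (u n) - T (x k)) + (T (x k) - x k) := by abel
      calc ‖T (u n) - x k‖ = ‖(T (u n) - T (x k)) + (T (x k) - x k)‖ := by rw [← e1]
      _ ≤ ‖T (u n) - T (x k)‖ + ‖T (x k) - x k‖ := norm_add_le _ _
      _ ≤ d + e := add_le_add (hT (u n) (x k)) (norm_sub_rev (T (x k)) (x k)).le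
    have h5' : ⟪t n • (v - x k), u n - x k⟫ = t n * (⟪v - u n, u n - x k⟫ + d^2) := by
      rw [real_inner_smul_left]
      congr 1
      have e2 : v - x k = (v - u n) + (u n - x k) := by abel
      rw [e2, inner_add_left, real_inner_self_eq_norm_sq]
    have h6' : ⟪v - u n, u n - x k⟫ = -⟪v - u n, x k - u n⟫ := by
      rw [← inner_neg_right]
      congr 1
      abel
    have hb0 : 0 ≤ ‖T (u n) - x k‖ := norm_nonneg _
    have hcore : 2*(t n)*⟪v - u n, x k - u n⟫ ≤ (t n)^2*d^2 + (2*d*e + e^2) := by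
      rw [h3', h5', h6'] at h2'
      have hB2 : ‖T (u n) - x k‖^2 ≤ (d+e)^2 := pow_le_pow_left₀ hb0 h4' 2
      have h1t : (1-t n)^2*‖T (u n) - x k‖^2 ≤ (1-t n)^2*(d+e)^2 :=
        mul_le_mul_of_nonneg_left hB2 (sq_nonneg _)
      have hde0 : 0 ≤ 2*d*e + e^2 := by positivity
      have hx1 : 0 ≤ (2*(t n) - (t n)^2) * (2*d*e+e^2) :=
        mul_nonneg (by nlinarith) hde0
      nlinarith [h2', h1t, hx1]
    -- bound the RHS
    have he1 : e ≤ 1 := le_trans hk.le (min_le_left _ _)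
    have heδ : e ≤ 2*(t n)*(ε/3)/(2*M2+1) := le_trans hk.le (min_le_right _ _)
    have h2M2 : (0:ℝ) < 2*M2+1 := by linarith
    have hde : 2*d*e + e^2 ≤ (2*M2+1)*e := by nlinarith
    have hee : (2*M2+1)*e ≤ 2*(t n)*(ε/3) := by
      have := mul_le_mul_of_nonneg_left heδ h2M2.le
      calc (2*M2+1)*e ≤ (2*M2+1)*(2*(t n)*(ε/3)/(2*M2+1)) := this
      _ = 2*(t n)*(ε/3) := mul_div_cancel₀ _ (ne_of_gt h2M2)
    have hdsq : d^2 ≤ M2^2 := by nlinarith [mul_self_le_mul_self hd0 hdM]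
    have ht2 : (t n)^2*d^2 ≤ (t n)*(2*ε/3) := by
      have ha1 := mul_le_mul_of_nonneg_left hdsq (sq_nonneg (t n))
      have ha2 : (t n)*((t n)*M2^2) ≤ (t n)*(2*ε/3) :=
        mul_le_mul_of_nonneg_left hn1.le (ht0 n).le
      calc (t n)^2*d^2 ≤ (t n)^2*M2^2 := ha1
      _ = (t n)*((t n)*M2^2) := by ring
      _ ≤ (t n)*(2*ε/3) := ha2
    have hI : ⟪v - u n, x k - u n⟫ ≤ 2*ε/3 := by
      have hfin : 2*(t n)*⟪v - u n, x k - u n⟫ ≤ 2*(t n)*(2*ε/3) := by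
        calc 2*(t n)*⟪v - u n, x k - u n⟫ ≤ (t n)^2*d^2 + (2*d*e + e^2) := hcore
        _ ≤ (t n)*(2*ε/3) + (2*M2+1)*e := add_le_add ht2 hde
        _ ≤ (t n)*(2*ε/3) + 2*(t n)*(ε/3) := by linarith [hee]
        _ = 2*(t n)*(2*ε/3) := by ring
      exact le_of_mul_le_mul_left hfin (by positivity)
    -- change of center
    have hcorr : ⟪v - ξ, x k - ξ⟫ ≤ ⟪v - u n, x k - u n⟫ + ‖u n - ξ‖ * C := by
      have e1 : v - ξ = (v - u n) + (u n - ξ) := by abel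
      have e2 : x k - ξ = (x k - u n) + (u n - ξ) := by abel
      have expand : ⟪v - ξ, x k - ξ⟫ = ⟪v - u n, x k - u n⟫ + ⟪v - u n, u n - ξ⟫
          + (⟪u n - ξ, x k - u n⟫ + ⟪u n - ξ, u n - ξ⟫) := by
        rw [e1, e2, inner_add_left, inner_add_right, inner_add_right]
      rw [expand]
      have c4 : 0 ≤ ‖u n - ξ‖ := norm_nonneg _
      have b1 : ⟪v - u n, u n - ξ⟫ ≤ ‖u n - ξ‖ * (2*‖v - p‖) := by
        calc ⟪v - u n, u n - ξ⟫ ≤ ‖v - u n‖ * ‖u n - ξ‖ := real_inner_le_norm _ _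
        _ ≤ (2*‖v - p‖) * ‖u n - ξ‖ := mul_le_mul_of_nonneg_right (hvu n) c4
        _ = ‖u n - ξ‖ * (2*‖v - p‖) := by ring
      have b2 : ⟪u n - ξ, x k - u n⟫ ≤ ‖u n - ξ‖ * M2 := by
        calc ⟪u n - ξ, x k - u n⟫ ≤ ‖u n - ξ‖ * ‖x k - u n‖ := real_inner_le_norm _ _
        _ ≤ ‖u n - ξ‖ * M2 := mul_le_mul_of_nonneg_left (hM2 k n) c4
      have b3 : ⟪u n - ξ, u n - ξ⟫ ≤ ‖u n - ξ‖ * (‖v - p‖ + ‖p - ξ‖) := by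
        rw [real_inner_self_eq_norm_sq]
        calc ‖u n - ξ‖^2 = ‖u n - ξ‖ * ‖u n - ξ‖ := sq ‖u n - ξ‖ ▸ by ring
        _ ≤ ‖u n - ξ‖ * (‖v - p‖ + ‖p - ξ‖) := mul_le_mul_of_nonneg_left (huξ n) c4
      have hCexp : ‖u n - ξ‖ * C = ‖u n - ξ‖ * (2*‖v - p‖) + ‖u n - ξ‖ * M2
          + ‖u n - ξ‖ * (‖v - p‖ + ‖p - ξ‖) := by rw [hCdef]; ring
      linarith [b1, b2, b3]
    calc ⟪v - ξ, x k - ξ⟫ ≤ ⟪v - u n, x k - u n⟫ + ‖u n - ξ‖ * C := hcorr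
    _ ≤ 2*ε/3 + ε/3 := add_le_add hI hn2.le
    _ = ε := by ring
  -- the recursive inequality and Xu's lemma
  set s : ℕ → ℝ := fun k => ‖x k - ξ‖^2 with hsdef
  set bb : ℕ → ℝ := fun k => 2*⟪v - ξ, x (k+1) - ξ⟫ with hbbdef
  have hrec : ∀ k, s (k+1) ≤ (1 - α k)*s k + α k * (bb k) := by
    intro k
    have hαk := hα k
    simp only [Set.mem_Ioo] at hαk
    have e1 : x (k+1) - ξ = α k • (v - ξ) + (1 - α k) • (T (x k) - ξ) := by
      rw [hx k]; module
    have h2 := sq_ineq' (α k • (v - ξ)) ((1 - α k) • (T (x k) - ξ))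
    rw [← e1] at h2
    have h3 : ‖(1 - α k) • (T (x k) - ξ)‖ = (1 - α k) * ‖T (x k) - ξ‖ := by
      rw [norm_smul, Real.norm_of_nonneg (by linarith)]
    have h4 : ‖T (x k) - ξ‖ ≤ ‖x k - ξ‖ := by
      have := hT (x k) ξ; rwa [hTξ] at this
    have h5 : ⟪α k • (v - ξ), x (k+1) - ξ⟫ = α k * ⟪v - ξ, x (k+1) - ξ⟫ :=
      real_inner_smul_left _ _ _
    rw [h3, h5] at h2
    have h6 : ‖T (x k) - ξ‖^2 ≤ ‖x k - ξ‖^2 := pow_le_pow_left₀ (norm_nonneg _) h4 2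
    have h7 : (1 - α k)^2 * ‖T (x k) - ξ‖^2 ≤ (1 - α k)^2 * ‖x k - ξ‖^2 :=
      mul_le_mul_of_nonneg_left h6 (sq_nonneg _)
    have h8 : 0 ≤ α k * (1 - α k) * ‖x k - ξ‖^2 :=
      mul_nonneg (mul_nonneg hαk.1.le (by linarith)) (sq_nonneg _)
    show ‖x (k+1) - ξ‖^2 ≤ (1 - α k)*‖x k - ξ‖^2 + α k * (2*⟪v - ξ, x (k+1) - ξ⟫)
    nlinarith [h2, h7, h8]
  have hbev : ∀ ε > 0, ∀ᶠ k in atTop, bb k ≤ ε := by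
    intro ε hε
    have h1 := climsup (ε/2) (by linarith)
    rw [eventually_atTop] at h1 ⊢
    obtain ⟨N, hN⟩ := h1
    refine ⟨N, fun k hk => ?_⟩
    have := hN (k+1) (by omega)
    show 2*⟪v - ξ, x (k+1) - ξ⟫ ≤ ε
    linarith
  have hdiv : Tendsto (fun n => ∑ i ∈ Finset.range n, α i) atTop atTop :=
    (not_summable_iff_tendsto_nat_atTop_of_nonneg (fun i => (hα i).1.le)).mp hαs
  have hs0 : Tendsto s atTop (𝓝 0) :=
    xu_lemma α bb s hα hdiv (fun k => sq_nonneg _) hrec hbev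
  have hxξ : Tendsto x atTop (𝓝 ξ) := by
    rw [tendsto_iff_dist_tendsto_zero]
    have heq : (fun k => dist (x k) ξ) = fun k => Real.sqrt (s k) := by
      funext k
      rw [dist_eq_norm, ← Real.sqrt_sq (norm_nonneg (x k - ξ))]
    rw [heq]
    have h := (Real.continuous_sqrt.tendsto 0).comp hs0
    rwa [Real.sqrt_zero] at h
  exact ⟨ξ, Function.mem_fixedPoints.mpr hTξ, fun w hw => hmin w hw, hxξ⟩
end

section
/- Let T : H → H be nonexpansive with Fix T nonempty and let x_{k+1} := α_k v + (1 − α_k) T(x_k) with α_k ∈ (0,1), α_k → 0, Σ α_k = +∞. If in addition Σ_{k≥0} |α_{k+1} − α_k| < +∞, then ‖x_k − T(x_k)‖ → 0 and x_k converges strongly to P_{Fix T}(v). -/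
/-!
Every fixed point `p` gives the bound `‖x k - p‖ ≤ max ‖x 0 - p‖ ‖v - p‖`, so the iterates are
bounded. Consecutive differences satisfy
`‖x (k+2) - x (k+1)‖ ≤ (1 - α (k+1)) ‖x (k+1) - x k‖ + C |α (k+1) - α k|`, hence tend to zero by
Xu's lemma on recursions `a (k+1) ≤ (1 - α k) a k + α k c k + b k` (with `limsup c ≤ 0`,
`∑ b < ∞`, `∑ α = ∞`), and `α k → 0` then gives `‖x k - T x k‖ → 0`.
Let `ξ` be the metric projection of `v` onto the closed convex set `Fix T`. Demiclosedness of
`I - T` makes every weak cluster point of the iterates a fixed point, so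
`limsup ⟪v - ξ, x k - ξ⟫ ≤ 0`, and Xu's lemma applied to
`‖x (k+1) - ξ‖² ≤ (1 - α k) ‖x k - ξ‖² + 2 α k ⟪v - ξ, x (k+1) - ξ⟫` gives `x k → ξ`.
-/

open Filter Topology RealInnerProductSpace Function

section Numerics

lemma tendsto_prod_one_sub_of_not_summable {α : ℕ → ℝ} (hα : ∀ k, α k ∈ Set.Icc (0 : ℝ) 1)
    (hαs : ¬ Summable α) :
    Tendsto (fun n => ∏ i ∈ Finset.range n, (1 - α i)) atTop (𝓝 0) := by
  have hsum := (not_summable_iff_tendsto_nat_atTop_of_nonneg fun k => (hα k).1).1 hαs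
  refine squeeze_zero (fun n => Finset.prod_nonneg fun i _ => sub_nonneg.2 (hα i).2) (fun n => ?_)
    (Real.tendsto_exp_atBot.comp (tendsto_neg_atTop_atBot.comp hsum))
  calc ∏ i ∈ Finset.range n, (1 - α i) ≤ ∏ i ∈ Finset.range n, Real.exp (-α i) :=
        Finset.prod_le_prod (fun i _ => sub_nonneg.2 (hα i).2) fun i _ => by
          linarith [Real.add_one_le_exp (-α i)]
    _ = Real.exp (-∑ i ∈ Finset.range n, α i) := by
        rw [← Real.exp_sum, Finset.sum_neg_distrib]

lemma tendsto_zero_of_le_one_sub_mul {u α : ℕ → ℝ} (hu : ∀ k, 0 ≤ u k)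
    (hα : ∀ k, α k ∈ Set.Icc (0 : ℝ) 1) (hαs : ¬ Summable α)
    (hrec : ∀ᶠ k in atTop, u (k + 1) ≤ (1 - α k) * u k) :
    Tendsto u atTop (𝓝 0) := by
  obtain ⟨N, hN⟩ := hrec.exists_forall_of_atTop
  have hprod : ∀ n, u (n + N) ≤ (∏ i ∈ Finset.range n, (1 - α (i + N))) * u N := by
    intro n
    induction n with
    | zero => simp
    | succ n ih =>
      calc u (n + 1 + N) = u (n + N + 1) := by rw [add_right_comm]
        _ ≤ (1 - α (n + N)) * u (n + N) := hN _ (Nat.le_add_left N n)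
        _ ≤ (1 - α (n + N)) * ((∏ i ∈ Finset.range n, (1 - α (i + N))) * u N) :=
          mul_le_mul_of_nonneg_left ih (sub_nonneg.2 (hα _).2)
        _ = _ := by rw [Finset.prod_range_succ]; ring
  have hprod0 := (tendsto_prod_one_sub_of_not_summable (fun i => hα (i + N))
    (mt (summable_nat_add_iff N).1 hαs)).mul_const (u N)
  rw [zero_mul] at hprod0
  exact (tendsto_add_atTop_iff_nat N).1 (squeeze_zero (fun n => hu _) hprod hprod0)

lemma tendsto_zero_of_le_one_sub_mul_add_mul {a c α : ℕ → ℝ} (ha : ∀ k, 0 ≤ a k)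
    (hα : ∀ k, α k ∈ Set.Icc (0 : ℝ) 1) (hαs : ¬ Summable α)
    (hc : ∀ ε > 0, ∀ᶠ k in atTop, c k ≤ ε)
    (hrec : ∀ k, a (k + 1) ≤ (1 - α k) * a k + α k * c k) :
    Tendsto a atTop (𝓝 0) := by
  refine tendsto_order.2 ⟨fun e he => Eventually.of_forall fun k => he.trans_le (ha k),
    fun ε hε => ?_⟩
  -- `max (a k - ε / 2) 0` contracts by the factor `1 - α k` as soon as `c k ≤ ε / 2`.
  have hu : Tendsto (fun k => max (a k - ε / 2) 0) atTop (𝓝 0) := by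
    refine tendsto_zero_of_le_one_sub_mul (fun k => le_max_right _ _) hα hαs ?_
    filter_upwards [hc (ε / 2) (half_pos hε)] with k hk
    have h1 : 0 ≤ 1 - α k := sub_nonneg.2 (hα k).2
    refine max_le ?_ (mul_nonneg h1 (le_max_right _ _))
    nlinarith [hrec k, (hα k).1, mul_le_mul_of_nonneg_left (le_max_left (a k - ε / 2) 0) h1]
  filter_upwards [(tendsto_order.1 hu).2 (ε / 2) (half_pos hε)] with k hk
  linarith [le_max_left (a k - ε / 2) 0]

lemma tendsto_zero_of_le_one_sub_mul_add_mul_add {a c α b : ℕ → ℝ} (ha : ∀ k, 0 ≤ a k)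
    (hα : ∀ k, α k ∈ Set.Icc (0 : ℝ) 1) (hαs : ¬ Summable α)
    (hc : ∀ ε > 0, ∀ᶠ k in atTop, c k ≤ ε) (hb : ∀ k, 0 ≤ b k) (hbs : Summable b)
    (hrec : ∀ k, a (k + 1) ≤ (1 - α k) * a k + α k * c k + b k) :
    Tendsto a atTop (𝓝 0) := by
  -- Adding the tail sums of `b` to `a` absorbs the perturbation `b` into `c`.
  set t : ℕ → ℝ := fun k => ∑' i, b (i + k)
  have ht0 : ∀ k, 0 ≤ t k := fun k => tsum_nonneg fun i => hb _
  have htsucc : ∀ k, t k = b k + t (k + 1) := fun k => by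
    show ∑' i, b (i + k) = b k + ∑' i, b (i + (k + 1))
    rw [((summable_nat_add_iff k).2 hbs).tsum_eq_zero_add]
    simp only [zero_add, add_assoc, add_comm 1 k]
  have htlim : Tendsto t atTop (𝓝 0) := tendsto_sum_nat_add b
  have hsum : Tendsto (fun k => a k + t k) atTop (𝓝 0) := by
    refine tendsto_zero_of_le_one_sub_mul_add_mul (c := fun k => c k + t k)
      (fun k => add_nonneg (ha k) (ht0 k)) hα hαs (fun ε hε => ?_) fun k => ?_
    · filter_upwards [hc (ε / 2) (half_pos hε), (tendsto_order.1 htlim).2 (ε / 2) (half_pos hε)]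
        with k hck htk
      linarith
    · linarith [hrec k, htsucc k]
  exact squeeze_zero ha (fun k => le_add_of_nonneg_right (ht0 k)) hsum

end Numerics

section Nonexpansive

variable {E : Type*} [NormedAddCommGroup E] {T : E → E}

lemma norm_apply_sub_le_of_isFixedPt (hT : ∀ x y, ‖T x - T y‖ ≤ ‖x - y‖) {p : E}
    (hp : IsFixedPt T p) (x : E) : ‖T x - p‖ ≤ ‖x - p‖ := by
  simpa only [hp.eq] using hT x p

lemma isClosed_fixedPoints_of_nonexpansive (hT : ∀ x y, ‖T x - T y‖ ≤ ‖x - y‖) :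
    IsClosed (fixedPoints T) :=
  isClosed_fixedPoints (LipschitzWith.of_dist_le_mul (K := 1) fun x y => by
    simpa [dist_eq_norm] using hT x y).continuous

end Nonexpansive

section Hilbert

variable {H : Type*} [NormedAddCommGroup H] [InnerProductSpace ℝ H]

lemma norm_add_sq_le_norm_sq_add_two_inner (a b : H) :
    ‖a + b‖ ^ 2 ≤ ‖a‖ ^ 2 + 2 * ⟪b, a + b⟫ := by
  rw [norm_add_sq_real, inner_add_right, real_inner_self_eq_norm_sq, real_inner_comm]
  nlinarith [sq_nonneg ‖b‖]

lemma exists_tendsto_inner_of_norm_le [CompleteSpace H] {ι : Type*} (U : Ultrafilter ι)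
    {y : ι → H} {M : ℝ} (hy : ∀ i, ‖y i‖ ≤ M) :
    ∃ w : H, ∀ u, Tendsto (fun i => ⟪y i, u⟫) U (𝓝 ⟪w, u⟫) := by
  have hbound : ∀ u i, |⟪y i, u⟫| ≤ M * ‖u‖ := fun u i =>
    (abs_real_inner_le_norm _ _).trans (mul_le_mul_of_nonneg_right (hy i) (norm_nonneg u))
  have hlim : ∀ u : H, ∃ r : ℝ, Tendsto (fun i => ⟪y i, u⟫) U (𝓝 r) := fun u => by
    have hmem : ↑(U.map fun i => ⟪y i, u⟫) ≤ 𝓟 (Set.Icc (-(M * ‖u‖)) (M * ‖u‖)) :=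
      le_principal_iff.2 (mem_map.2 (univ_mem' fun i => abs_le.1 (hbound u i)))
    obtain ⟨r, -, hr⟩ := isCompact_Icc.ultrafilter_le_nhds _ hmem
    exact ⟨r, hr⟩
  choose φ hφ using hlim
  let L : H →ₗ[ℝ] ℝ :=
    { toFun := φ
      map_add' := fun u w => tendsto_nhds_unique (hφ (u + w)) <| by
        simpa only [inner_add_right] using (hφ u).add (hφ w)
      map_smul' := fun c u => tendsto_nhds_unique (hφ (c • u)) <| by
        simpa only [inner_smul_right, RingHom.id_apply, smul_eq_mul] using (hφ u).const_mul c }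
  have hL : ∀ u, ‖L u‖ ≤ M * ‖u‖ := fun u =>
    le_of_tendsto (hφ u).norm (Eventually.of_forall (hbound u))
  refine ⟨(InnerProductSpace.toDual ℝ H).symm (L.mkContinuous M hL), fun u => ?_⟩
  rw [InnerProductSpace.toDual_symm_apply]
  exact hφ u

variable {T : H → H}

lemma two_mul_inner_add_norm_sq_le_zero (hT : ∀ x y, ‖T x - T y‖ ≤ ‖x - y‖) {p : H}
    (hp : IsFixedPt T p) (x : H) :
    2 * ⟪x - p, T x - x⟫ + ‖T x - x‖ ^ 2 ≤ 0 := by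
  have h := norm_add_sq_real (x - p) (T x - x)
  rw [sub_add_sub_cancel'] at h
  nlinarith [norm_apply_sub_le_of_isFixedPt hT hp x, norm_nonneg (T x - p)]

lemma convex_fixedPoints (hT : ∀ x y, ‖T x - T y‖ ≤ ‖x - y‖) : Convex ℝ (fixedPoints T) := by
  intro p hp q hq a b ha hb hab
  set m := a • p + b • q
  -- Averaging the inequalities at `p` and `q` with weights `a`, `b` kills the inner products.
  have hcomb : a • (m - p) + b • (m - q) = 0 := by
    obtain rfl : b = 1 - a := by linarith
    simp only [m]; module
  have hp' := two_mul_inner_add_norm_sq_le_zero hT hp m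
  have hq' := two_mul_inner_add_norm_sq_le_zero hT hq m
  have hcomb' := congrArg (fun z => ⟪z, T m - m⟫) hcomb
  simp only [inner_add_left, real_inner_smul_left, inner_zero_left] at hcomb'
  have hsq : ‖T m - m‖ ^ 2 ≤ 0 := by
    nlinarith [mul_le_mul_of_nonneg_left hp' ha, mul_le_mul_of_nonneg_left hq' hb]
  exact sub_eq_zero.1 (norm_eq_zero.1 ((sq_nonpos_iff _).1 hsq))

lemma isFixedPt_of_tendsto_inner (hT : ∀ x y, ‖T x - T y‖ ≤ ‖x - y‖) {ι : Type*} {l : Filter ι}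
    [l.NeBot] {y : ι → H} {M : ℝ} (hy : ∀ i, ‖y i‖ ≤ M) {w : H}
    (hw : ∀ u, Tendsto (fun i => ⟪y i, u⟫) l (𝓝 ⟪w, u⟫))
    (hreg : Tendsto (fun i => ‖y i - T (y i)‖) l (𝓝 0)) : IsFixedPt T w := by
  set h := w - T w
  have hpt : ∀ i, ‖h‖ ^ 2 ≤
      -2 * ⟪y i - w, h⟫ + ‖y i - T (y i)‖ * (2 * (M + ‖w‖) + ‖y i - T (y i)‖) := fun i => by
    have hsplit := norm_add_sq_real (y i - w) h
    rw [show y i - w + h = y i - T w by simp only [h]; abel] at hsplit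
    have htri : ‖y i - T w‖ ≤ ‖y i - T (y i)‖ + ‖y i - w‖ := by
      linarith [norm_sub_le_norm_sub_add_norm_sub (y i) (T (y i)) (T w), hT (y i) w]
    have hyw : ‖y i - w‖ ≤ M + ‖w‖ := (norm_sub_le _ _).trans (by linarith [hy i])
    nlinarith [norm_nonneg (y i - T w), norm_nonneg (y i - T (y i)), norm_nonneg (y i - w)]
  have hinner : Tendsto (fun i => ⟪y i - w, h⟫) l (𝓝 0) := by
    simpa only [inner_sub_left, sub_self] using (hw h).sub_const ⟪w, h⟫
  have hrhs := (hinner.const_mul (-2)).add (hreg.mul (hreg.const_add (2 * (M + ‖w‖))))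
  rw [mul_zero, zero_mul, add_zero] at hrhs
  have hsq : ‖h‖ ^ 2 ≤ 0 := ge_of_tendsto hrhs (Eventually.of_forall hpt)
  exact (sub_eq_zero.1 (norm_eq_zero.1 ((sq_nonpos_iff _).1 hsq))).symm

lemma exists_norm_sub_le_and_inner_le_zero [CompleteSpace H] {K : Set H} (hne : K.Nonempty)
    (hclosed : IsClosed K) (hconv : Convex ℝ K) (v : H) :
    ∃ ξ ∈ K, (∀ w ∈ K, ‖v - ξ‖ ≤ ‖v - w‖) ∧ ∀ w ∈ K, ⟪v - ξ, w - ξ⟫ ≤ 0 := by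
  obtain ⟨ξ, hξ, hmin⟩ := exists_norm_eq_iInf_of_complete_convex hne hclosed.isComplete hconv v
  refine ⟨ξ, hξ, fun w hw => ?_, (norm_eq_iInf_iff_real_inner_le_zero hconv hξ).1 hmin⟩
  rw [hmin]
  exact ciInf_le ⟨0, Set.forall_mem_range.2 fun _ => norm_nonneg _⟩ (⟨w, hw⟩ : K)

lemma eventually_inner_sub_le_of_tendsto_norm_sub_apply [CompleteSpace H]
    (hT : ∀ x y, ‖T x - T y‖ ≤ ‖x - y‖) {y : ℕ → H} {M : ℝ} (hy : ∀ k, ‖y k‖ ≤ M)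
    (hreg : Tendsto (fun k => ‖y k - T (y k)‖) atTop (𝓝 0)) {z ξ : H}
    (hξ : ∀ w ∈ fixedPoints T, ⟪z, w - ξ⟫ ≤ 0) :
    ∀ ε > 0, ∀ᶠ k in atTop, ⟪z, y k - ξ⟫ ≤ ε := by
  intro ε hε
  by_contra hfreq
  -- Along an ultrafilter on the indices where the bound fails, `y` has a weak limit, which is a
  -- fixed point of `T` by demiclosedness.
  have := frequently_iff_neBot.1 (not_eventually.1 hfreq)
  set U := Ultrafilter.of (atTop ⊓ 𝓟 {k | ¬ ⟪z, y k - ξ⟫ ≤ ε})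
  have hU : (U : Filter ℕ) ≤ atTop ⊓ 𝓟 {k | ¬ ⟪z, y k - ξ⟫ ≤ ε} := Ultrafilter.of_le _
  obtain ⟨w, hw⟩ := exists_tendsto_inner_of_norm_le U hy
  have hfix : IsFixedPt T w :=
    isFixedPt_of_tendsto_inner hT hy hw (hreg.mono_left (hU.trans inf_le_left))
  have hlim : Tendsto (fun k => ⟪z, y k - ξ⟫) U (𝓝 ⟪z, w - ξ⟫) := by
    simpa only [inner_sub_right, real_inner_comm z] using (hw z).sub_const ⟪z, ξ⟫
  have hge : ε ≤ ⟪z, w - ξ⟫ := ge_of_tendsto hlim <|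
    mem_of_superset (le_principal_iff.1 (hU.trans inf_le_right)) fun k hk => (not_le.1 hk).le
  linarith [hξ w hfix]

end Hilbert

namespace Halpern

variable {H : Type*} [NormedAddCommGroup H] [InnerProductSpace ℝ H] {T : H → H} {v : H}
  {α : ℕ → ℝ} {x : ℕ → H}

lemma norm_sub_le_max (hT : ∀ x y, ‖T x - T y‖ ≤ ‖x - y‖) (hα : ∀ k, α k ∈ Set.Ioo (0 : ℝ) 1)
    (hx : ∀ k, x (k + 1) = α k • v + (1 - α k) • T (x k)) {p : H} (hp : IsFixedPt T p) (k : ℕ) :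
    ‖x k - p‖ ≤ max ‖x 0 - p‖ ‖v - p‖ := by
  induction k with
  | zero => exact le_max_left _ _
  | succ k ih =>
    obtain ⟨hα0, hα1⟩ := hα k
    have hsplit : x (k + 1) - p = α k • (v - p) + (1 - α k) • (T (x k) - p) := by
      rw [hx k]; module
    have hTx := (norm_apply_sub_le_of_isFixedPt hT hp (x k)).trans ih
    calc ‖x (k + 1) - p‖ ≤ α k * ‖v - p‖ + (1 - α k) * ‖T (x k) - p‖ := by
          rw [hsplit]
          refine (norm_add_le _ _).trans_eq ?_
          rw [norm_smul, norm_smul, Real.norm_of_nonneg hα0.le,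
            Real.norm_of_nonneg (sub_nonneg.2 hα1.le)]
      _ ≤ α k * max ‖x 0 - p‖ ‖v - p‖ + (1 - α k) * max ‖x 0 - p‖ ‖v - p‖ := by
          gcongr
          exact le_max_right _ _
      _ = max ‖x 0 - p‖ ‖v - p‖ := by ring

lemma exists_bound (hT : ∀ x y, ‖T x - T y‖ ≤ ‖x - y‖) (hα : ∀ k, α k ∈ Set.Ioo (0 : ℝ) 1)
    (hx : ∀ k, x (k + 1) = α k • v + (1 - α k) • T (x k)) (hfix : (fixedPoints T).Nonempty) :
    ∃ C, ∀ k, ‖x k‖ ≤ C ∧ ‖v - T (x k)‖ ≤ C := by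
  obtain ⟨p, hp⟩ := hfix
  set R := max ‖x 0 - p‖ ‖v - p‖
  refine ⟨2 * R + ‖p‖, fun k => ⟨?_, ?_⟩⟩
  · have := norm_sub_le_max hT hα hx hp k
    linarith [norm_le_norm_sub_add (x k) p, norm_nonneg (x 0 - p), le_max_left ‖x 0 - p‖ ‖v - p‖]
  · have := (norm_apply_sub_le_of_isFixedPt hT hp (x k)).trans (norm_sub_le_max hT hα hx hp k)
    linarith [norm_sub_le_norm_sub_add_norm_sub v p (T (x k)), norm_sub_rev p (T (x k)),
      le_max_right ‖x 0 - p‖ ‖v - p‖, norm_nonneg p]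

lemma norm_sub_succ_le (hT : ∀ x y, ‖T x - T y‖ ≤ ‖x - y‖) (hα : ∀ k, α k ∈ Set.Ioo (0 : ℝ) 1)
    (hx : ∀ k, x (k + 1) = α k • v + (1 - α k) • T (x k)) (k : ℕ) :
    ‖x (k + 2) - x (k + 1)‖ ≤
      (1 - α (k + 1)) * ‖x (k + 1) - x k‖ + |α (k + 1) - α k| * ‖v - T (x k)‖ := by
  have hsplit : x (k + 2) - x (k + 1) =
      (1 - α (k + 1)) • (T (x (k + 1)) - T (x k)) + (α (k + 1) - α k) • (v - T (x k)) := by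
    rw [hx (k + 1), hx k]; module
  have h1 : 0 ≤ 1 - α (k + 1) := sub_nonneg.2 (hα (k + 1)).2.le
  rw [hsplit]
  refine (norm_add_le _ _).trans ?_
  rw [norm_smul, norm_smul, Real.norm_of_nonneg h1, Real.norm_eq_abs]
  gcongr
  exact hT _ _

lemma norm_sub_apply_le (hα : ∀ k, α k ∈ Set.Ioo (0 : ℝ) 1)
    (hx : ∀ k, x (k + 1) = α k • v + (1 - α k) • T (x k)) (k : ℕ) :
    ‖x k - T (x k)‖ ≤ ‖x (k + 1) - x k‖ + α k * ‖v - T (x k)‖ := by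
  have hsplit : x k - T (x k) = (x k - x (k + 1)) + α k • (v - T (x k)) := by
    rw [hx k]; module
  rw [hsplit]
  refine (norm_add_le _ _).trans_eq ?_
  rw [norm_sub_rev, norm_smul, Real.norm_of_nonneg (hα k).1.le]

lemma tendsto_norm_sub_apply (hT : ∀ x y, ‖T x - T y‖ ≤ ‖x - y‖)
    (hα : ∀ k, α k ∈ Set.Ioo (0 : ℝ) 1) (hα0 : Tendsto α atTop (𝓝 0)) (hαs : ¬ Summable α)
    (hαd : Summable fun k => |α (k + 1) - α k|)
    (hx : ∀ k, x (k + 1) = α k • v + (1 - α k) • T (x k)) {C : ℝ}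
    (hC : ∀ k, ‖v - T (x k)‖ ≤ C) :
    Tendsto (fun k => ‖x k - T (x k)‖) atTop (𝓝 0) := by
  have hstep : Tendsto (fun k => ‖x (k + 1) - x k‖) atTop (𝓝 0) := by
    refine tendsto_zero_of_le_one_sub_mul_add_mul_add (c := 0) (fun k => norm_nonneg _)
      (fun k => Set.Ioo_subset_Icc_self (hα (k + 1))) (mt (summable_nat_add_iff 1).1 hαs)
      (fun ε hε => Eventually.of_forall fun _ => hε.le)
      (fun k => mul_nonneg (abs_nonneg _) ((norm_nonneg _).trans (hC 0)))
      (hαd.mul_right C) fun k => ?_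
    have := norm_sub_succ_le hT hα hx k
    have := mul_le_mul_of_nonneg_left (hC k) (abs_nonneg (α (k + 1) - α k))
    simp only [Pi.zero_apply, mul_zero, add_zero]
    linarith
  have hbound := hstep.add (hα0.mul_const C)
  rw [zero_mul, add_zero] at hbound
  refine squeeze_zero (fun k => norm_nonneg _) (fun k => ?_) hbound
  exact (norm_sub_apply_le hα hx k).trans (by gcongr; exacts [(hα k).1.le, hC k])

lemma norm_succ_sub_sq_le (hT : ∀ x y, ‖T x - T y‖ ≤ ‖x - y‖)
    (hα : ∀ k, α k ∈ Set.Ioo (0 : ℝ) 1) (hx : ∀ k, x (k + 1) = α k • v + (1 - α k) • T (x k))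
    {ξ : H} (hξ : IsFixedPt T ξ) (k : ℕ) :
    ‖x (k + 1) - ξ‖ ^ 2 ≤ (1 - α k) * ‖x k - ξ‖ ^ 2 + α k * (2 * ⟪v - ξ, x (k + 1) - ξ⟫) := by
  obtain ⟨hα0, hα1⟩ := hα k
  have hsplit : x (k + 1) - ξ = (1 - α k) • (T (x k) - ξ) + α k • (v - ξ) := by
    rw [hx k]; module
  have hT' := norm_apply_sub_le_of_isFixedPt hT hξ (x k)
  have hsq : ‖(1 - α k) • (T (x k) - ξ)‖ ^ 2 ≤ (1 - α k) * ‖x k - ξ‖ ^ 2 := by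
    have h1 : 0 ≤ 1 - α k := by linarith
    rw [norm_smul, Real.norm_of_nonneg h1, mul_pow]
    have := mul_le_mul_of_nonneg_left (pow_le_pow_left₀ (norm_nonneg _) hT' 2) h1
    nlinarith [mul_nonneg (mul_nonneg hα0.le h1) (sq_nonneg ‖T (x k) - ξ‖)]
  have := norm_add_sq_le_norm_sq_add_two_inner ((1 - α k) • (T (x k) - ξ)) (α k • (v - ξ))
  rw [← hsplit, real_inner_smul_left] at this
  linarith

lemma tendsto_of_eventually_inner_le (hT : ∀ x y, ‖T x - T y‖ ≤ ‖x - y‖)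
    (hα : ∀ k, α k ∈ Set.Ioo (0 : ℝ) 1) (hαs : ¬ Summable α)
    (hx : ∀ k, x (k + 1) = α k • v + (1 - α k) • T (x k)) {ξ : H} (hξ : IsFixedPt T ξ)
    (hinner : ∀ ε > 0, ∀ᶠ k in atTop, ⟪v - ξ, x (k + 1) - ξ⟫ ≤ ε) :
    Tendsto x atTop (𝓝 ξ) := by
  have hsq : Tendsto (fun k => ‖x k - ξ‖ ^ 2) atTop (𝓝 0) := by
    refine tendsto_zero_of_le_one_sub_mul_add_mul (fun k => sq_nonneg _)
      (fun k => Set.Ioo_subset_Icc_self (hα k)) hαs (fun ε hε => ?_)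
      (norm_succ_sub_sq_le hT hα hx hξ)
    filter_upwards [hinner (ε / 2) (half_pos hε)] with k hk
    linarith
  rw [tendsto_iff_norm_sub_tendsto_zero]
  simpa only [Real.sqrt_sq (norm_nonneg _), Real.sqrt_zero] using hsq.sqrt

end Halpern

theorem stmt7 {H : Type*} [NormedAddCommGroup H] [InnerProductSpace ℝ H] [CompleteSpace H]
    (T : H → H) (hT : ∀ x y : H, ‖T x - T y‖ ≤ ‖x - y‖)
    (hfix : (Function.fixedPoints T).Nonempty)
    (v : H) (α : ℕ → ℝ) (hα : ∀ k, α k ∈ Set.Ioo (0:ℝ) 1)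
    (hα0 : Tendsto α atTop (nhds 0)) (hαs : ¬ Summable α)
    (hαd : Summable (fun k => |α (k+1) - α k|))
    (x : ℕ → H) (hx : ∀ k, x (k+1) = α k • v + (1 - α k) • T (x k)) :
    Tendsto (fun k => ‖x k - T (x k)‖) atTop (nhds 0) ∧
    ∃ ξ ∈ Function.fixedPoints T,
      (∀ w ∈ Function.fixedPoints T, ‖v - ξ‖ ≤ ‖v - w‖) ∧
      Tendsto x atTop (nhds ξ) := by
  obtain ⟨C, hC⟩ := Halpern.exists_bound hT hα hx hfix
  have hreg := Halpern.tendsto_norm_sub_apply hT hα hα0 hαs hαd hx fun k => (hC k).2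
  obtain ⟨ξ, hξ, hmin, hproj⟩ := exists_norm_sub_le_and_inner_le_zero hfix
    (isClosed_fixedPoints_of_nonexpansive hT) (convex_fixedPoints hT) v
  refine ⟨hreg, ξ, hξ, hmin, Halpern.tendsto_of_eventually_inner_le hT hα hαs hx hξ ?_⟩
  exact eventually_inner_sub_le_of_tendsto_norm_sub_apply hT (fun k => (hC (k + 1)).1)
    (hreg.comp (tendsto_add_atTop_nat 1)) hproj
end

section
/- Let 0 < q < 1, 0 < c < b^q, d ≥ 0, and let {ξ_k}_{k≥1} be nonnegative reals with ξ_{k+1} ≤ (1 − c/(k+b)^q) ξ_k + d/((k+b)^q (k+b−1)) for all k ≥ 1. Then for every k ≥ k₁ := max{1, ⌈(2/c)^{1/(1−q)} − b⌉}, one has ξ_{k+1} ≤ (1/(k+b+1)) · max{(k₁+b) ξ_{k₁}, 2d(b+2)/(cb)}. -/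
theorem stmt10 (q b c d : ℝ) (hq : 0 < q) (hq1 : q < 1) (hb : 0 < b)
    (hc : 0 < c) (hcb : c < b ^ q) (hd : 0 ≤ d) (ξ : ℕ → ℝ)
    (hξ : ∀ k, 1 ≤ k → 0 ≤ ξ k)
    (hrec : ∀ k, 1 ≤ k →
      ξ (k+1) ≤ (1 - c / ((k:ℝ)+b)^q) * ξ k + d / (((k:ℝ)+b)^q * ((k:ℝ)+b-1))) :
    ∀ k₁ : ℕ, k₁ = max 1 ⌈(2/c)^(1/(1-q)) - b⌉₊ →
      ∀ k, k₁ ≤ k →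
        ξ (k+1) ≤ (1/((k:ℝ)+b+1)) * max (((k₁:ℝ)+b) * ξ k₁) (2*d*(b+2)/(c*b)) := by
  intro k₁ hk₁ k hk
  set M := max (((k₁:ℝ)+b) * ξ k₁) (2*d*(b+2)/(c*b)) with hM
  have hk₁1 : 1 ≤ k₁ := hk₁ ▸ le_max_left 1 _
  have hMd : 2*d*(b+2) ≤ M * (c*b) := by
    rw [← div_le_iff₀ (by positivity)]
    exact le_max_right _ _
  have hM0 : 0 ≤ M := le_trans (by positivity) (le_max_right _ _)
  have hceil : ∀ m : ℕ, k₁ ≤ m → (2/c)^(1/(1-q)) ≤ (m:ℝ) + b := by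
    intro m hm
    have h1 : (2/c)^(1/(1-q)) - b ≤ (⌈(2/c)^(1/(1-q)) - b⌉₊ : ℝ) := Nat.le_ceil _
    have h2 : (⌈(2/c)^(1/(1-q)) - b⌉₊ : ℕ) ≤ m := le_trans (hk₁ ▸ le_max_right 1 _) hm
    have h3 : ((⌈(2/c)^(1/(1-q)) - b⌉₊ : ℕ) : ℝ) ≤ (m:ℝ) := Nat.cast_le.mpr h2
    linarith
  have main : ∀ m, k₁ ≤ m → ξ m ≤ M / ((m:ℝ)+b) := by
    intro m hm
    induction m, hm using Nat.le_induction with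
    | base =>
      have hpos : (0:ℝ) < (k₁:ℝ) + b := by positivity
      rw [le_div_iff₀ hpos, mul_comm]
      exact le_max_left _ _
    | succ n hn ih =>
      have hn1 : 1 ≤ n := le_trans hk₁1 hn
      have hn1' : (1:ℝ) ≤ (n:ℝ) := by exact_mod_cast hn1
      set t : ℝ := (n:ℝ) + b with ht
      have ht1 : 1 < t := by simp only [ht]; linarith
      have htb : b + 1 ≤ t := by simp only [ht]; linarith
      have ht0 : 0 < t := by linarith
      set pt : ℝ := t ^ q with hpt
      have hpt0 : 0 < pt := Real.rpow_pos_of_pos ht0 q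
      -- c ≤ pt
      have hcpt : c ≤ pt := by
        have : b ^ q ≤ t ^ q := Real.rpow_le_rpow hb.le (by linarith) hq.le
        linarith
      -- 2 * pt ≤ c * t
      have hct : 2 * pt ≤ c * t := by
        have h1q : (0:ℝ) < 1 - q := by linarith
        have hle : (2/c)^(1/(1-q)) ≤ t := hceil n hn
        have hb0 : (0:ℝ) ≤ (2/c)^(1/(1-q)) := Real.rpow_nonneg (by positivity) _
        have h2 : ((2/c)^(1/(1-q)))^(1-q) ≤ t^(1-q) :=
          Real.rpow_le_rpow hb0 hle h1q.le
        have h3 : ((2/c)^(1/(1-q)))^(1-q) = 2/c := by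
          rw [← Real.rpow_mul (by positivity),
            one_div_mul_cancel (by linarith : (1:ℝ) - q ≠ 0), Real.rpow_one]
        have h4 : t^(1-q) = t / pt := by
          rw [hpt, Real.rpow_sub ht0, Real.rpow_one]
        rw [h3, h4] at h2
        rw [div_le_div_iff₀ hc hpt0] at h2
        linarith
      -- c * M * (t - 1) ≥ 2 * d * t
      have h2dt : 2 * d * t ≤ c * M * (t - 1) := by
        have key : b * (c * M * (t-1) - 2*d*t) ≥ 0 := by
          nlinarith [mul_nonneg (by linarith : (0:ℝ) ≤ M*(c*b) - 2*d*(b+2)) (by linarith : (0:ℝ) ≤ t - 1),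
            mul_nonneg (mul_nonneg (by linarith : (0:ℝ) ≤ 2*d) (by linarith : (0:ℝ) ≤ 2*t - b - 2)) (le_refl (0:ℝ))]
        nlinarith [key, hb]
      -- recursion
      have hrecn := hrec n hn1
      have hcoef : 0 ≤ 1 - c / pt := by
        rw [sub_nonneg, div_le_one hpt0]; exact hcpt
      have step1 : ξ (n+1) ≤ (1 - c/pt) * (M/t) + d / (pt * (t-1)) := by
        calc ξ (n+1) ≤ (1 - c/pt) * ξ n + d / (pt * (t-1)) := hrecn
          _ ≤ (1 - c/pt) * (M/t) + d / (pt * (t-1)) := by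
              gcongr
      clear_value pt t
      have key : (1 - c/pt) * (M/t) + d / (pt * (t-1)) ≤ M / (t+1) := by
        have hne1 : t - 1 ≠ 0 := by linarith
        have hne2 : t + 1 ≠ 0 := by linarith
        have hne3 : t ≠ 0 := by linarith
        have hne4 : pt ≠ 0 := ne_of_gt hpt0
        rw [← sub_nonneg]
        have heq : M/(t+1) - ((1 - c/pt) * (M/t) + d / (pt * (t-1))) =
            ((t-1)*(M*c*(t+1) - M*pt) - d*t*(t+1)) / (pt*t*(t-1)*(t+1)) := by
          field_simp
          ring
        rw [heq]
        apply div_nonneg _ (le_of_lt (mul_pos (mul_pos (mul_pos hpt0 ht0) (by linarith)) (by linarith)))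
        nlinarith [mul_nonneg (mul_nonneg hM0 (by linarith : (0:ℝ) ≤ t-1)) (by linarith : (0:ℝ) ≤ c*t - 2*pt),
          mul_nonneg (by linarith : (0:ℝ) ≤ c*M*(t-1) - 2*d*t) (by linarith : (0:ℝ) ≤ t+2),
          mul_nonneg hd ht0.le]
      have : ((n+1 : ℕ) : ℝ) + b = t + 1 := by push_cast; rw [ht]; ring
      rw [this]
      linarith
  have hfin := main (k+1) (le_trans hk (Nat.le_succ k))
  have hcast : ((k+1 : ℕ) : ℝ) + b = (k:ℝ) + b + 1 := by push_cast; ring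
  rw [hcast] at hfin
  calc ξ (k+1) ≤ M / ((k:ℝ)+b+1) := hfin
    _ = (1/((k:ℝ)+b+1)) * M := by ring
end

section
/- Let c > 1, 0 < c < b, d ≥ 0, and let {ξ_k}_{k≥1} be nonnegative reals with ξ_{k+1} ≤ (1 − c/(k+b)) ξ_k + d/((k+b)(k+b−1)) for all k ≥ 1. Then for every k ≥ 1, ξ_{k+1} ≤ (1/(k+b+1)) · max{(b+1) ξ₁, d(b+2)/((c−1)b)}. -/
set_option maxHeartbeats 1000000


theorem stmt11 (b c d : ℝ) (hc : 1 < c) (hcb : c < b) (hd : 0 ≤ d)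
    (ξ : ℕ → ℝ) (hξ : ∀ k, 1 ≤ k → 0 ≤ ξ k)
    (hrec : ∀ k, 1 ≤ k →
      ξ (k+1) ≤ (1 - c/((k:ℝ)+b)) * ξ k + d/(((k:ℝ)+b)*((k:ℝ)+b-1))) :
    ∀ k, 1 ≤ k →
      ξ (k+1) ≤ (1/((k:ℝ)+b+1)) * max ((b+1) * ξ 1) (d*(b+2)/((c-1)*b)) := by
  have hb1 : (1:ℝ) < b := hc.trans hcb
  set M := max ((b+1) * ξ 1) (d*(b+2)/((c-1)*b)) with hMdef
  have hM1 : (b+1) * ξ 1 ≤ M := le_max_left _ _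
  have hM2 : d*(b+2)/((c-1)*b) ≤ M := le_max_right _ _
  have hM0 : 0 ≤ M := le_trans (mul_nonneg (by linarith) (hξ 1 le_rfl)) hM1
  have hcb0 : 0 < (c-1)*b := by nlinarith
  have hdM : d*(b+2) ≤ M*((c-1)*b) := by
    rw [div_le_iff₀ hcb0] at hM2; linarith
  clear_value M
  have key : ∀ k, 1 ≤ k → ξ k ≤ M/((k:ℝ)+b) := by
    intro k hk
    induction k with
    | zero => omega
    | succ n ih =>
      rcases Nat.lt_or_ge n 1 with hn | hn
      · interval_cases n
        norm_num
        rw [le_div_iff₀ (by linarith)]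
        nlinarith [hξ 1 le_rfl]
      · have ihn := ih hn
        set x : ℝ := (n:ℝ)+b with hx
        have hn1 : (1:ℝ) ≤ (n:ℝ) := by exact_mod_cast hn
        have hxb : (b:ℝ)+1 ≤ x := by rw [hx]; linarith
        have hx1 : (1:ℝ) < x := by linarith
        have hx0 : (0:ℝ) < x := by linarith
        have hrecn := hrec n hn
        have hcoef : 0 ≤ 1 - c/x := by
          rw [sub_nonneg, div_le_one hx0]; linarith
        have step1 : ξ (n+1) ≤ (1 - c/x)*(M/x) + d/(x*(x-1)) := by
          refine le_trans hrecn ?_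
          have := mul_le_mul_of_nonneg_left ihn hcoef
          linarith
        clear_value x
        have hxne : x ≠ 0 := ne_of_gt hx0
        have hx1ne : x - 1 ≠ 0 := by intro h; nlinarith
        have hxp1 : (0:ℝ) < x + 1 := by linarith
        -- key polynomial inequality
        have hA : d*(b+2)*(x*(x+1)) ≤ M*((c-1)*b)*(x*(x+1)) :=
          mul_le_mul_of_nonneg_right hdM (by positivity)
        have hBc : b*(x+1) ≤ (b+2)*(x-1) := by nlinarith
        have hB : M*(c-1)*x*(b*(x+1)) ≤ M*(c-1)*x*((b+2)*(x-1)) :=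
          mul_le_mul_of_nonneg_left hBc (mul_nonneg (mul_nonneg hM0 (by linarith)) hx0.le)
        have hC : (0:ℝ) ≤ M*(c*(x-1))*(b+2) := mul_nonneg (mul_nonneg hM0 (mul_nonneg (by linarith) (by linarith))) (by linarith)
        have h3 : d*(x*(x+1))*(b+2) ≤ M*((c-1)*x^2 + x - c)*(b+2) := by nlinarith [hA, hB, hC]
        have h4 : d*(x*(x+1)) ≤ M*((c-1)*x^2 + x - c) :=
          le_of_mul_le_mul_right h3 (by linarith)
        have final : (1 - c/x)*(M/x) + d/(x*(x-1)) ≤ M/(x+1) := by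
          have key2 : M/(x+1) - ((1 - c/x)*(M/x) + d/(x*(x-1)))
              = (M*((c-1)*x^2 + x - c) - d*(x*(x+1))) / (x*x*(x-1)*(x+1)) := by
            field_simp
            ring
          have hden : (0:ℝ) < x*x*(x-1)*(x+1) := mul_pos (mul_pos (mul_pos hx0 hx0) (by linarith)) hxp1
          have := div_nonneg (sub_nonneg.2 h4) hden.le
          linarith [key2, this]
        have goalcast : ((n+1 : ℕ):ℝ) + b = x + 1 := by push_cast; rw [hx]; ring
        rw [goalcast]
        exact step1.trans final
  intro k hk
  have h := key (k+1) (by omega)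
  have hcast : ((k+1 : ℕ):ℝ) + b = (k:ℝ) + b + 1 := by push_cast; ring
  rw [hcast] at h
  rw [one_div_mul_eq_div]
  exact h
end

section
/- Let c = 1 < b, d ≥ 0, and let {ξ_k}_{k≥1} be nonnegative reals with ξ_{k+1} ≤ (1 − 1/(k+b)) ξ_k + d/((k+b)(k+b−1)) for all k ≥ 1. Then for every k ≥ 1, ξ_{k+1} ≤ ((1+b)ξ₁ + 3d)/(k+b+1) + 3d · log(k)/(k+b+1). -/
/-!
Multiplying the recursion by `k + b` turns it into `η (k+1) ≤ η k + d / (k + b - 1)` for the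
weighted sequence `η k = (k + b - 1) ξ k`. Telescoping and `1 / (k + b - 1) ≤ 1 / k` give
`(k + b) ξ (k+1) ≤ b ξ 1 + d H_k ≤ b ξ 1 + d (1 + log k)`, which is stronger than the claim.
-/

open Finset

lemma le_add_sum_of_succ_le {u c : ℕ → ℝ} (h : ∀ k, 1 ≤ k → u (k + 1) ≤ u k + c k) (n : ℕ) :
    u (n + 1) ≤ u 1 + ∑ i ∈ range n, c (i + 1) := by
  induction n with
  | zero => simp
  | succ n ih =>
    rw [sum_range_succ]
    linarith [h (n + 1) (Nat.le_add_left 1 n)]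

lemma sum_range_div_succ_le_mul_one_add_log {d : ℝ} (hd : 0 ≤ d) (n : ℕ) :
    ∑ i ∈ range n, d / ((i : ℝ) + 1) ≤ d * (1 + Real.log n) := by
  have h := harmonic_le_one_add_log n
  simp only [harmonic] at h
  push_cast at h
  simpa only [div_eq_mul_inv, ← mul_sum] using mul_le_mul_of_nonneg_left h hd

lemma mul_le_of_le_one_sub_inv_mul_add {a x y d : ℝ} (ha : 1 < a)
    (h : y ≤ (1 - 1 / a) * x + d / (a * (a - 1))) :
    a * y ≤ (a - 1) * x + d / (a - 1) := by
  have ha0 : 0 < a := by linarith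
  have ha1 : a - 1 ≠ 0 := by linarith
  calc a * y ≤ a * ((1 - 1 / a) * x + d / (a * (a - 1))) := by gcongr
    _ = (a - 1) * x + d / (a - 1) := by field_simp

lemma div_add_le_div_add_of_le {b d x L y : ℝ} {k : ℕ} (hk : 1 ≤ k) (hb : 1 < b) (hd : 0 ≤ d)
    (hx : 0 ≤ x) (hL : 0 ≤ L) (h : (k + b) * y ≤ b * x + d * (1 + L)) :
    y ≤ ((1 + b) * x + 3 * d) / (k + b + 1) + 3 * d * L / (k + b + 1) := by
  have hk1 : (1 : ℝ) ≤ k := by exact_mod_cast hk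
  have hkb : (0 : ℝ) < k + b := by linarith
  rw [← add_div, le_div_iff₀ (by linarith)]
  -- `b / (k + b) ≤ (1 + b) / (k + b + 1)` and `k + b + 1 ≤ 3 (k + b)`
  nlinarith [mul_nonneg hx (by linarith : (0 : ℝ) ≤ k), mul_nonneg hd hL,
    mul_nonneg (mul_nonneg hd hL) (by linarith : (0 : ℝ) ≤ k)]

theorem stmt12 (b d : ℝ) (hb : 1 < b) (hd : 0 ≤ d)
    (ξ : ℕ → ℝ) (hξ : ∀ k, 1 ≤ k → 0 ≤ ξ k)
    (hrec : ∀ k, 1 ≤ k →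
      ξ (k+1) ≤ (1 - 1/((k:ℝ)+b)) * ξ k + d/(((k:ℝ)+b)*((k:ℝ)+b-1))) :
    ∀ k, 1 ≤ k →
      ξ (k+1) ≤ ((1+b)*ξ 1 + 3*d)/((k:ℝ)+b+1) + 3*d*Real.log k/((k:ℝ)+b+1) := by
  intro k hk
  let η : ℕ → ℝ := fun j ↦ ((j : ℝ) + b - 1) * ξ j
  have step : ∀ j, 1 ≤ j → η (j + 1) ≤ η j + d / j := by
    intro j hj
    have hj1 : (1 : ℝ) ≤ j := by exact_mod_cast hj
    have h := mul_le_of_le_one_sub_inv_mul_add (by linarith) (hrec j hj)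
    have : d / ((j : ℝ) + b - 1) ≤ d / j := div_le_div_of_nonneg_left hd (by linarith) (by linarith)
    simp only [η]
    push_cast
    linarith
  have telescoped := le_add_sum_of_succ_le step k
  simp only [η] at telescoped
  push_cast at telescoped
  have harmonic_bound := sum_range_div_succ_le_mul_one_add_log hd k
  refine div_add_le_div_add_of_le hk hb hd (hξ 1 le_rfl) (Real.log_natCast_nonneg k) ?_
  linarith
end

section
/- Let 0 < c < 1, c < b, d ≥ 0, and let {ξ_k}_{k≥1} be nonnegative reals with ξ_{k+1} ≤ (1 − c/(k+b)) ξ_k + d/((k+b)(k+b−1)) for all k ≥ 1. Then for every k ≥ 1, ξ_{k+1} ≤ (1/(k+b+1)^c) · ((b+1)^c ξ₁ + d(b+1)(b+3−c)/(b²(b+2)^{1−c}(1−c))). -/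
/-!
With `s = k + b`, Bernoulli's inequality gives `(1 - c/s) (s+1)^c ≤ s^c`, so multiplying the
recursion by `(s+1)^c` shows that `(k+b)^c ξ_k` grows by at most `d (s+1)^c / (s(s-1))` per step.
For a constant `M = M(b, c)` that increment is at most `d M ((s-1)^(c-1) - s^(c-1))` (convexity
of `x ↦ x^(c-1)`, again via Bernoulli), so `(k+b)^c ξ_k + d M (k+b-1)^(c-1)` is nonincreasing in
`k ≥ 1`; comparing its value at `k+1` with its value at `1` gives the bound.
-/

open Real

theorem one_add_rpow_mul_one_sub_mul_le_one {x p : ℝ} (hx : -1 ≤ x) (hp0 : 0 ≤ p) (hp1 : p ≤ 1) :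
    (1 + x) ^ p * (1 - p * x) ≤ 1 := by
  rcases le_or_gt 0 (1 - p * x) with h | h
  · calc (1 + x) ^ p * (1 - p * x) ≤ (1 + p * x) * (1 - p * x) := by
          gcongr; exact rpow_one_add_le_one_add_mul_self hx hp0 hp1
      _ ≤ 1 := by nlinarith [sq_nonneg (p * x)]
  · have : 0 ≤ (1 + x) ^ p := rpow_nonneg (by linarith) p
    nlinarith

theorem one_sub_div_mul_add_one_rpow_le {c s : ℝ} (hc0 : 0 ≤ c) (hc1 : c ≤ 1) (hs : 0 < s) :
    (1 - c / s) * (s + 1) ^ c ≤ s ^ c := by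
  have h := one_add_rpow_mul_one_sub_mul_le_one (x := s⁻¹) (by linarith [inv_pos.2 hs]) hc0 hc1
  have hsplit : (s + 1) ^ c = s ^ c * (1 + s⁻¹) ^ c := by
    rw [← mul_rpow hs.le (by positivity)]; congr 1; field_simp
  calc (1 - c / s) * (s + 1) ^ c = s ^ c * ((1 + s⁻¹) ^ c * (1 - c * s⁻¹)) := by
        rw [hsplit]; ring
    _ ≤ s ^ c := mul_le_of_le_one_right (by positivity) h

theorem one_sub_mul_rpow_sub_two_le {c s : ℝ} (hc0 : 0 ≤ c) (hc1 : c ≤ 1) (hs : 1 < s) :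
    (1 - c) * s ^ (c - 2) ≤ (s - 1) ^ (c - 1) - s ^ (c - 1) := by
  have hs0 : 0 < s := by linarith
  have hq : 0 < 1 - s⁻¹ := by rw [sub_pos]; exact inv_lt_one_of_one_lt₀ hs
  have h := one_add_rpow_mul_one_sub_mul_le_one (x := -s⁻¹) (p := 1 - c)
    (by linarith [inv_pos.2 hs0]) (by linarith) (by linarith)
  have hinv : 1 + (1 - c) * s⁻¹ ≤ (1 - s⁻¹) ^ (c - 1) := by
    rw [show c - 1 = -(1 - c) by ring, rpow_neg hq.le, inv_eq_one_div ((1 - s⁻¹) ^ (1 - c)), le_div_iff₀ (rpow_pos_of_pos hq _), mul_comm]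
    rwa [← sub_eq_add_neg, mul_neg, sub_neg_eq_add] at h
  have hsplit : (s - 1) ^ (c - 1) = s ^ (c - 1) * (1 - s⁻¹) ^ (c - 1) := by
    rw [← mul_rpow hs0.le hq.le]; congr 1; field_simp
  have htwo : s ^ (c - 2) = s ^ (c - 1) * s⁻¹ := by
    rw [show c - 2 = (c - 1) + -1 by ring, rpow_add hs0, rpow_neg_one]
  rw [hsplit, htwo]
  have : 0 < s ^ (c - 1) := rpow_pos_of_pos hs0 _
  nlinarith

theorem add_one_rpow_div_mul_sub_one_le {b c s : ℝ} (hb : 0 < b) (hc : 0 ≤ c) (hs : b + 1 ≤ s) :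
    (s + 1) ^ c / (s * (s - 1)) ≤ ((b + 2) / (b + 1)) ^ c * ((b + 1) / b) * s ^ (c - 2) := by
  have hs0 : 0 < s := by linarith
  have hnum : (s + 1) ^ c ≤ ((b + 2) / (b + 1)) ^ c * s ^ c := by
    rw [← mul_rpow (by positivity) hs0.le]
    gcongr
    rw [div_mul_eq_mul_div, le_div_iff₀ (by positivity)]
    nlinarith
  have hden : b / (b + 1) * s ^ 2 ≤ s * (s - 1) := by
    rw [div_mul_eq_mul_div, div_le_iff₀ (by positivity)]
    nlinarith
  calc (s + 1) ^ c / (s * (s - 1)) ≤ ((b + 2) / (b + 1)) ^ c * s ^ c / (b / (b + 1) * s ^ 2) :=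
        div_le_div₀ (by positivity) hnum (by positivity) hden
    _ = ((b + 2) / (b + 1)) ^ c * ((b + 1) / b) * s ^ (c - 2) := by
        rw [rpow_sub hs0, rpow_two]
        field_simp

noncomputable def telescopeConst (b c : ℝ) : ℝ :=
  ((b + 2) / (b + 1)) ^ c * ((b + 1) / b) / (1 - c)

theorem add_one_rpow_div_mul_sub_one_le_telescopeConst {b c s : ℝ} (hb : 0 < b) (hc0 : 0 ≤ c)
    (hc1 : c < 1) (hs : b + 1 ≤ s) :
    (s + 1) ^ c / (s * (s - 1)) ≤ telescopeConst b c * ((s - 1) ^ (c - 1) - s ^ (c - 1)) := by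
  have hc : 0 < 1 - c := by linarith
  calc (s + 1) ^ c / (s * (s - 1)) ≤ ((b + 2) / (b + 1)) ^ c * ((b + 1) / b) * s ^ (c - 2) :=
        add_one_rpow_div_mul_sub_one_le hb hc0 hs
    _ ≤ ((b + 2) / (b + 1)) ^ c * ((b + 1) / b) * (((s - 1) ^ (c - 1) - s ^ (c - 1)) / (1 - c)) := by
        gcongr
        rw [le_div_iff₀ hc, mul_comm]
        exact one_sub_mul_rpow_sub_two_le hc0 hc1.le (by linarith)
    _ = telescopeConst b c * ((s - 1) ^ (c - 1) - s ^ (c - 1)) := by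
        rw [telescopeConst]; ring

theorem telescopeConst_mul_rpow_le {b c : ℝ} (hb : 0 < b) (hc0 : 0 ≤ c) (hc1 : c < 1) :
    telescopeConst b c * b ^ (c - 1) ≤
      (b + 1) * (b + 3 - c) / (b ^ 2 * (b + 2) ^ (1 - c) * (1 - c)) := by
  have hc : 0 < 1 - c := by linarith
  have hbc : b ^ c ≤ (b + 1) ^ c := rpow_le_rpow hb.le (by linarith) hc0
  have hkey : (b + 2) * b ^ c ≤ (b + 3 - c) * (b + 1) ^ c :=
    mul_le_mul (by linarith) hbc (by positivity) (by linarith)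
  have h1 : (0:ℝ) < (b + 1) ^ c := by positivity
  rw [telescopeConst, rpow_sub hb, rpow_sub (by positivity : (0:ℝ) < b + 2), rpow_one, rpow_one,
    div_rpow (by positivity) (by positivity)]
  calc (b + 2) ^ c / (b + 1) ^ c * ((b + 1) / b) / (1 - c) * (b ^ c / b)
      = (b + 1) * (b + 2) ^ c / (b ^ 2 * (b + 2) * (1 - c)) * ((b + 2) * b ^ c / (b + 1) ^ c) := by
        field_simp
    _ ≤ (b + 1) * (b + 2) ^ c / (b ^ 2 * (b + 2) * (1 - c)) * (b + 3 - c) := by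
        gcongr
        rwa [div_le_iff₀ h1]
    _ = (b + 1) * (b + 3 - c) / (b ^ 2 * ((b + 2) / (b + 2) ^ c) * (1 - c)) := by
        field_simp

theorem add_one_rpow_mul_le_of_le {b c d s x x' : ℝ} (hb : 0 < b) (hc0 : 0 ≤ c) (hc1 : c < 1)
    (hd : 0 ≤ d) (hs : b + 1 ≤ s) (hx : 0 ≤ x) (hx' : x' ≤ (1 - c / s) * x + d / (s * (s - 1))) :
    (s + 1) ^ c * x' ≤
      s ^ c * x + d * telescopeConst b c * ((s - 1) ^ (c - 1) - s ^ (c - 1)) := by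
  have hs0 : 0 < s := by linarith
  have hdecay := one_sub_div_mul_add_one_rpow_le hc0 hc1.le hs0
  have hincr := add_one_rpow_div_mul_sub_one_le_telescopeConst hb hc0 hc1 hs
  calc (s + 1) ^ c * x' ≤ (s + 1) ^ c * ((1 - c / s) * x + d / (s * (s - 1))) := by gcongr
    _ = (1 - c / s) * (s + 1) ^ c * x + d * ((s + 1) ^ c / (s * (s - 1))) := by ring
    _ ≤ s ^ c * x + d * (telescopeConst b c * ((s - 1) ^ (c - 1) - s ^ (c - 1))) := by gcongr
    _ = s ^ c * x + d * telescopeConst b c * ((s - 1) ^ (c - 1) - s ^ (c - 1)) := by ring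

theorem stmt13 (b c d : ℝ) (hc0 : 0 < c) (hc1 : c < 1) (hcb : c < b) (hd : 0 ≤ d)
    (ξ : ℕ → ℝ) (hξ : ∀ k, 1 ≤ k → 0 ≤ ξ k)
    (hrec : ∀ k, 1 ≤ k →
      ξ (k+1) ≤ (1 - c/((k:ℝ)+b)) * ξ k + d/(((k:ℝ)+b)*((k:ℝ)+b-1))) :
    ∀ k, 1 ≤ k →
      ξ (k+1) ≤ (1/(((k:ℝ)+b+1)^c)) *
        ((b+1)^c * ξ 1 + d*(b+1)*(b+3-c)/(b^2*(b+2)^(1-c)*(1-c))) := by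
  have hb : 0 < b := hc0.trans hcb
  set Φ : ℕ → ℝ := fun k ↦
    ((k:ℝ) + b) ^ c * ξ k + d * telescopeConst b c * ((k:ℝ) + b - 1) ^ (c - 1) with hΦ
  have hanti : AntitoneOn Φ (Set.Ici 1) := by
    refine antitoneOn_nat_Ici_of_succ_le fun k hk ↦ ?_
    have hk' : b + 1 ≤ (k:ℝ) + b := by
      have : (1:ℝ) ≤ k := by exact_mod_cast hk
      linarith
    have := add_one_rpow_mul_le_of_le hb hc0.le hc1 hd hk' (hξ k hk) (hrec k hk)
    simp only [hΦ, Nat.cast_succ, add_right_comm _ (1:ℝ) b, add_sub_cancel_right]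
    linarith
  intro k hk
  have hΦk : Φ (k + 1) ≤ Φ 1 := hanti (Set.mem_Ici.2 le_rfl) (Set.mem_Ici.2 (by omega)) (by omega)
  have hM : 0 ≤ telescopeConst b c := div_nonneg (by positivity) (by linarith)
  have htail : 0 ≤ d * telescopeConst b c * ((k:ℝ) + b) ^ (c - 1) := by positivity
  have hconst := mul_le_mul_of_nonneg_left (telescopeConst_mul_rpow_le hb hc0.le hc1) hd
  simp only [hΦ, Nat.cast_succ, Nat.cast_zero, zero_add, add_right_comm _ (1:ℝ) b,
    add_sub_cancel_right, add_comm (1:ℝ) b] at hΦk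
  rw [one_div_mul_eq_div, le_div_iff₀ (by positivity)]
  linear_combination hΦk + htail + hconst
end

section
/- Let T : H → H be nonexpansive with fixed point ξ, and define the Halpern sequence x_{k+1} := (1/(k+2)) v + ((k+1)/(k+2)) T(x_k) for k ≥ 0 with given x₀, v ∈ H. Set D₀ := max{‖x₀ − ξ‖, ‖v − ξ‖}. Then for every k ≥ 1, (k+2)² ‖x_{k+1} − x_k‖² ≤ (2(6+π²)/3) D₀² + ‖v + T(x₀) − 2x₀‖² − ‖T(x₀) − v‖². In particular ‖x_{k+1} − x_k‖ = O(1/k). -/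
set_option maxHeartbeats 1000000

lemma expand14 {H : Type*} [NormedAddCommGroup H] [InnerProductSpace ℝ H]
    (α β : ℝ) (a b : H) :
    ‖α • a + β • b‖^2 =
      α^2*‖a‖^2 + α*β*(‖a+b‖^2 - ‖a‖^2 - ‖b‖^2) + β^2*‖b‖^2 := by
  have h1 := @norm_add_sq_real H _ _ (α • a) (β • b)
  have h2 := @norm_add_sq_real H _ _ a b
  rw [real_inner_smul_left, real_inner_smul_right, norm_smul, norm_smul] at h1
  simp only [mul_pow, Real.norm_eq_abs, sq_abs] at h1
  linear_combination h1 - α*β*h2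

theorem stmt14 {H : Type*} [NormedAddCommGroup H] [InnerProductSpace ℝ H]
    (T : H → H) (hT : ∀ x y : H, ‖T x - T y‖ ≤ ‖x - y‖)
    (ξ v x₀ : H) (hξ : T ξ = ξ)
    (x : ℕ → H) (hx0 : x 0 = x₀)
    (hx : ∀ k : ℕ, x (k+1) = (1/((k:ℝ)+2)) • v + (((k:ℝ)+1)/((k:ℝ)+2)) • T (x k))
    (D₀ : ℝ) (hD₀ : D₀ = max ‖x₀ - ξ‖ ‖v - ξ‖) :
    ∀ k : ℕ, 1 ≤ k →
      ((k:ℝ)+2)^2 * ‖x (k+1) - x k‖^2 ≤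
        2*(6+Real.pi^2)/3 * D₀^2 + ‖v + T x₀ - (2:ℝ)•x₀‖^2 - ‖T x₀ - v‖^2 := by
  have hD0 : 0 ≤ D₀ := hD₀ ▸ le_trans (norm_nonneg _) (le_max_left _ _)
  have hvξ : ‖v - ξ‖ ≤ D₀ := hD₀ ▸ le_max_right _ _
  -- boundedness
  have hbd : ∀ k, ‖x k - ξ‖ ≤ D₀ := by
    intro k
    induction k with
    | zero => rw [hx0]; exact hD₀ ▸ le_max_left _ _
    | succ k ih =>
      have heq : x (k+1) - ξ =
          (1/((k:ℝ)+2)) • (v - ξ) + (((k:ℝ)+1)/((k:ℝ)+2)) • (T (x k) - ξ) := by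
        rw [hx k]
        match_scalars <;> (field_simp; try ring)
      have hTxk : ‖T (x k) - ξ‖ ≤ D₀ := by
        calc ‖T (x k) - ξ‖ = ‖T (x k) - T ξ‖ := by rw [hξ]
          _ ≤ ‖x k - ξ‖ := hT _ _
          _ ≤ D₀ := ih
      have h1 : ‖x (k+1) - ξ‖ ≤
          (1/((k:ℝ)+2)) * ‖v - ξ‖ + (((k:ℝ)+1)/((k:ℝ)+2)) * ‖T (x k) - ξ‖ := by
        rw [heq]
        refine le_trans (norm_add_le _ _) ?_
        rw [norm_smul, norm_smul, Real.norm_eq_abs, Real.norm_eq_abs,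
          abs_of_pos (by positivity), abs_of_pos (by positivity)]
      have h2 : (1/((k:ℝ)+2)) * ‖v - ξ‖ + (((k:ℝ)+1)/((k:ℝ)+2)) * ‖T (x k) - ξ‖
          ≤ (1/((k:ℝ)+2)) * D₀ + (((k:ℝ)+1)/((k:ℝ)+2)) * D₀ := by
        gcongr <;> positivity
      have h3 : (1/((k:ℝ)+2)) * D₀ + (((k:ℝ)+1)/((k:ℝ)+2)) * D₀ = D₀ := by
        field_simp; ring
      linarith
  have hb : ∀ k, ‖T (x k) - v‖ ≤ 2*D₀ := by
    intro k
    have h1 : ‖T (x k) - ξ‖ ≤ D₀ := by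
      calc ‖T (x k) - ξ‖ = ‖T (x k) - T ξ‖ := by rw [hξ]
        _ ≤ ‖x k - ξ‖ := hT _ _
        _ ≤ D₀ := hbd k
    calc ‖T (x k) - v‖ ≤ ‖T (x k) - ξ‖ + ‖ξ - v‖ := norm_sub_le_norm_sub_add_norm_sub _ _ _
      _ = ‖T (x k) - ξ‖ + ‖v - ξ‖ := by rw [norm_sub_rev ξ v]
      _ ≤ D₀ + D₀ := add_le_add h1 hvξ
      _ = 2*D₀ := by ring
  -- key recursion
  have key : ∀ k : ℕ,
      ((k:ℝ)+3)^2 * ‖x (k+1+1) - x (k+1)‖^2 - ‖T (x (k+1)) - v‖^2 ≤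
        (((k:ℝ)+2)^2 * ‖x (k+1) - x k‖^2 - ‖T (x k) - v‖^2)
          + (2*D₀)^2 * (1/((k:ℝ)+1) - 1/((k:ℝ)+2)) := by
    intro k
    set K := (k:ℝ) with hK
    have hK0 : (0:ℝ) ≤ K := Nat.cast_nonneg k
    have hveq : x (k+1+1) - x (k+1) =
        ((K+2)/(K+3)) • (T (x (k+1)) - T (x k))
          + (1/((K+2)*(K+3))) • (T (x k) - v) := by
      rw [hx (k+1), hx k]
      push_cast
      match_scalars <;> (field_simp; try ring)
    have hexp := expand14 ((K+2)/(K+3)) (1/((K+2)*(K+3)))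
        (T (x (k+1)) - T (x k)) (T (x k) - v)
    rw [← hveq] at hexp
    have hab : T (x (k+1)) - T (x k) + (T (x k) - v) = T (x (k+1)) - v := by abel
    rw [hab] at hexp
    have hAd : ‖T (x (k+1)) - T (x k)‖^2 ≤ ‖x (k+1) - x k‖^2 :=
      pow_le_pow_left₀ (norm_nonneg _) (hT _ _) 2
    have hA0 : (0:ℝ) ≤ ‖T (x (k+1)) - T (x k)‖^2 := by positivity
    have hBb : ‖T (x k) - v‖^2 ≤ (2*D₀)^2 := pow_le_pow_left₀ (norm_nonneg _) (hb k) 2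
    have hexp2 : (K+3)^2 * ‖x (k+1+1) - x (k+1)‖^2
        = (K+2)^2 * ‖T (x (k+1)) - T (x k)‖^2
          + (‖T (x (k+1)) - v‖^2 - ‖T (x (k+1)) - T (x k)‖^2 - ‖T (x k) - v‖^2)
          + ‖T (x k) - v‖^2/(K+2)^2 := by
      rw [hexp]; field_simp
    have hBdiv : ‖T (x k) - v‖^2/(K+2)^2 ≤ (2*D₀)^2 * (1/(K+1) - 1/(K+2)) := by
      have h1 : (1:ℝ)/(K+1) - 1/(K+2) = 1/((K+1)*(K+2)) := by field_simp; ring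
      rw [h1, mul_one_div]
      apply div_le_div₀ (by positivity) hBb (by positivity)
      nlinarith
    have hdpos : (K+2)^2 * ‖T (x (k+1)) - T (x k)‖^2 ≤ (K+2)^2 * ‖x (k+1) - x k‖^2 :=
      mul_le_mul_of_nonneg_left hAd (by positivity)
    linarith [hexp2, hBdiv, hdpos, hA0]
  -- telescoping
  have tele : ∀ k : ℕ,
      ((k:ℝ)+2)^2 * ‖x (k+1) - x k‖^2 - ‖T (x k) - v‖^2 ≤
        (4*‖x 1 - x 0‖^2 - ‖T (x 0) - v‖^2) + (2*D₀)^2 * (1 - 1/((k:ℝ)+1)) := by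
    intro k
    induction k with
    | zero => norm_num
    | succ k ih =>
      have h1 := key k
      push_cast at h1 ih ⊢
      ring_nf at h1 ih ⊢
      linarith
  -- initial value
  have hx1 : x 1 - x 0 = (1/2 : ℝ) • (v + T x₀ - (2:ℝ)•x₀) := by
    have h := hx 0
    norm_num at h
    rw [h, hx0]
    match_scalars <;> norm_num
  have hΦ0 : 4*‖x 1 - x 0‖^2 - ‖T (x 0) - v‖^2
      = ‖v + T x₀ - (2:ℝ)•x₀‖^2 - ‖T x₀ - v‖^2 := by
    rw [hx1, hx0, norm_smul]
    simp [Real.norm_eq_abs, mul_pow]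
    ring
  intro k hk
  have h1 := tele k
  rw [hΦ0] at h1
  have h2 : ‖T (x k) - v‖^2 ≤ (2*D₀)^2 := pow_le_pow_left₀ (norm_nonneg _) (hb k) 2
  have hpi : Real.pi > 3 := Real.pi_gt_three
  have hfrac : 0 ≤ (2*D₀)^2 * (1/((k:ℝ)+1)) := by positivity
  have hpi2 : (9:ℝ) ≤ Real.pi^2 := by nlinarith [hpi]
  have hD2 : 0 ≤ (Real.pi^2 - 9) * D₀^2 :=
    mul_nonneg (by linarith) (sq_nonneg D₀)
  linarith [h1, h2, hfrac, hD2, sq_nonneg D₀]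
end

section
/- Let T : H → H be nonexpansive with fixed point ξ, x_{k+1} := (1/(k+2)) v + ((k+1)/(k+2)) T(x_k), and D₀ := max{‖x₀ − ξ‖, ‖v − ξ‖}. Then for every k ≥ 1, ‖x_{k+1} − T(x_{k+1})‖ ≤ (1/(k+2)) √( (2(6+π²)/3) D₀² + ‖v + T(x₀) − 2x₀‖² − ‖T(x₀) − v‖² ) + 2D₀/(k+2); in particular the fixed point residual vanishes at rate O(1/k). -/
open scoped RealInnerProductSpace

set_option maxHeartbeats 1000000

private lemma halpern_coco {H : Type*} [NormedAddCommGroup H] [InnerProductSpace ℝ H]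
    (T : H → H) (hT : ∀ x y : H, ‖T x - T y‖ ≤ ‖x - y‖) (a b : H) :
    (1/2) * ‖(a - T a) - (b - T b)‖^2 ≤ ⟪(a - T a) - (b - T b), a - b⟫ := by
  have h := hT a b
  have h2 : ‖T a - T b‖^2 ≤ ‖a - b‖^2 := by
    have := norm_nonneg (T a - T b)
    nlinarith
  have hre : (a - T a) - (b - T b) = (a - b) - (T a - T b) := by abel
  rw [hre]
  have hexp : ‖(a - b) - (T a - T b)‖^2 = ‖a - b‖^2 - 2*⟪a - b, T a - T b⟫ + ‖T a - T b‖^2 := by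
    rw [norm_sub_sq_real]
  have hil : ⟪(a - b) - (T a - T b), a - b⟫ = ‖a - b‖^2 - ⟪a - b, T a - T b⟫ := by
    rw [inner_sub_left, real_inner_self_eq_norm_sq, real_inner_comm]
  rw [hexp, hil]
  linarith

private lemma halpern_key_id {H : Type*} [NormedAddCommGroup H] [InnerProductSpace ℝ H]
    (c : ℝ) (hc : c + 2 ≠ 0) (a b b' v : H) :
    (c*(c+1)/2)*‖a - b‖^2 + (c+1)*⟪a - b, a - v⟫
    - (((c+1)*(c+2)/2)*‖((1/(c+2))•v + ((c+1)/(c+2))•b) - b'‖^2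
       + (c+2)*⟪((1/(c+2))•v + ((c+1)/(c+2))•b) - b', ((1/(c+2))•v + ((c+1)/(c+2))•b) - v⟫)
    = (c+1)*(c+2) * (⟪(((1/(c+2))•v + ((c+1)/(c+2))•b) - b') - (a - b),
        ((1/(c+2))•v + ((c+1)/(c+2))•b) - a⟫
      - (1/2)*‖(((1/(c+2))•v + ((c+1)/(c+2))•b) - b') - (a - b)‖^2) := by
  simp only [← real_inner_self_eq_norm_sq]
  simp only [inner_sub_left, inner_sub_right, inner_add_left, inner_add_right,
    real_inner_smul_left, real_inner_smul_right]
  simp only [real_inner_comm b a, real_inner_comm v a, real_inner_comm v b,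
    real_inner_comm b' a, real_inner_comm b' b, real_inner_comm b' v]
  field_simp
  ring

theorem stmt15 {H : Type*} [NormedAddCommGroup H] [InnerProductSpace ℝ H]
    (T : H → H) (hT : ∀ x y : H, ‖T x - T y‖ ≤ ‖x - y‖)
    (ξ v x₀ : H) (hξ : T ξ = ξ)
    (x : ℕ → H) (hx0 : x 0 = x₀)
    (hx : ∀ k, x (k+1) = (1/((k:ℝ)+2)) • v + (((k:ℝ)+1)/((k:ℝ)+2)) • T (x k))
    (D₀ : ℝ) (hD₀ : D₀ = max ‖x₀ - ξ‖ ‖v - ξ‖) :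
    ∀ k, 1 ≤ k →
      ‖x (k+1) - T (x (k+1))‖ ≤
        (1/((k:ℝ)+2)) * Real.sqrt
          (2*(6+Real.pi^2)/3 * D₀^2 + ‖v + T x₀ - (2:ℝ)•x₀‖^2 - ‖T x₀ - v‖^2)
        + 2*D₀/((k:ℝ)+2) := by
  have hDx : ‖x₀ - ξ‖ ≤ D₀ := hD₀ ▸ le_max_left _ _
  have hDv : ‖v - ξ‖ ≤ D₀ := hD₀ ▸ le_max_right _ _
  have hD0 : 0 ≤ D₀ := le_trans (norm_nonneg _) hDx
  -- potential is nonincreasing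
  have pot : ∀ n : ℕ, ((n:ℝ)*((n:ℝ)+1)/2)*‖x n - T (x n)‖^2
      + ((n:ℝ)+1)*⟪x n - T (x n), x n - v⟫ ≤ ⟪x 0 - T (x 0), x 0 - v⟫ := by
    intro n
    induction n with
    | zero => push_cast; nlinarith [sq_nonneg ‖x 0 - T (x 0)‖]
    | succ k ih =>
      refine le_trans ?_ ih
      have hc : (k:ℝ) + 2 ≠ 0 := by positivity
      have hkey := halpern_key_id (k:ℝ) hc (x k) (T (x k)) (T (x (k+1))) v
      rw [← hx k] at hkey
      have hco := halpern_coco T hT (x (k+1)) (x k)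
      have hmu : (0:ℝ) ≤ ((k:ℝ)+1)*((k:ℝ)+2) := by positivity
      push_cast
      nlinarith [mul_le_mul_of_nonneg_left hco hmu]
  -- cocoercivity at ξ
  have hcoxi : ∀ m : ℕ, (1/2)*‖x m - T (x m)‖^2 ≤ ⟪x m - T (x m), x m - ξ⟫ := by
    intro m
    have := halpern_coco T hT (x m) ξ
    rw [hξ, sub_self, sub_zero] at this
    exact this
  -- inner product lower bound
  have hlow : ∀ m : ℕ, (1/2)*‖x m - T (x m)‖^2 - ‖x m - T (x m)‖ * ‖v - ξ‖
      ≤ ⟪x m - T (x m), x m - v⟫ := by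
    intro m
    have hsplit : ⟪x m - T (x m), x m - v⟫
        = ⟪x m - T (x m), x m - ξ⟫ + ⟪x m - T (x m), ξ - v⟫ := by
      rw [← inner_add_right]; congr 1; abel
    have habs : |⟪x m - T (x m), ξ - v⟫| ≤ ‖x m - T (x m)‖ * ‖ξ - v‖ :=
      abs_real_inner_le_norm _ _
    have hnrm : ‖ξ - v‖ = ‖v - ξ‖ := norm_sub_rev _ _
    rw [hnrm] at habs
    have h1 : -(‖x m - T (x m)‖ * ‖v - ξ‖) ≤ ⟪x m - T (x m), ξ - v⟫ := by
      linarith [neg_abs_le ⟪x m - T (x m), ξ - v⟫]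
    linarith [hcoxi m, hsplit.ge, hsplit.le]
  -- main quadratic bound at index m
  have hquad : ∀ m : ℕ, (((m:ℝ)+1)^2/2)*‖x m - T (x m)‖^2
      - ((m:ℝ)+1)*‖v - ξ‖*‖x m - T (x m)‖ ≤ ⟪x 0 - T (x 0), x 0 - v⟫ := by
    intro m
    have h1 := pot m
    have h2 := hlow m
    have hm1 : (0:ℝ) ≤ (m:ℝ)+1 := by positivity
    nlinarith [mul_le_mul_of_nonneg_left h2 hm1]
  have hC0' : ⟪x 0 - T (x 0), x 0 - v⟫ = ⟪v - x₀, T x₀ - x₀⟫ := by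
    rw [hx0]
    rw [show x₀ - T x₀ = -(T x₀ - x₀) by abel, show x₀ - v = -(v - x₀) by abel,
      inner_neg_neg, real_inner_comm]
  have hS4 : ‖v + T x₀ - (2:ℝ)•x₀‖^2 - ‖T x₀ - v‖^2 = 4*⟪v - x₀, T x₀ - x₀⟫ := by
    rw [show v + T x₀ - (2:ℝ)•x₀ = (v - x₀) + (T x₀ - x₀) by rw [two_smul]; abel,
      show T x₀ - v = (T x₀ - x₀) - (v - x₀) by abel]
    rw [norm_add_sq_real (v - x₀) (T x₀ - x₀), norm_sub_sq_real (T x₀ - x₀) (v - x₀),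
      real_inner_comm (T x₀ - x₀) (v - x₀)]
    ring
  have hq2 : ‖T x₀ - x₀‖ ≤ 2*D₀ := by
    have hre : T x₀ - x₀ = (T x₀ - T ξ) + (ξ - x₀) := by rw [hξ]; abel
    rw [hre]
    refine le_trans (norm_add_le _ _) ?_
    have h1 := hT x₀ ξ
    have h2 : ‖ξ - x₀‖ = ‖x₀ - ξ‖ := norm_sub_rev _ _
    linarith
  have hpq : -(2*D₀^2) ≤ ⟪v - x₀, T x₀ - x₀⟫ := by
    have hsplit : ⟪v - x₀, T x₀ - x₀⟫
        = ⟪v - ξ, T x₀ - x₀⟫ + ⟪ξ - x₀, T x₀ - x₀⟫ := by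
      rw [← inner_add_left]; congr 1; abel
    have h1 : -(‖v - ξ‖ * ‖T x₀ - x₀‖) ≤ ⟪v - ξ, T x₀ - x₀⟫ := by
      linarith [neg_abs_le ⟪v - ξ, T x₀ - x₀⟫, abs_real_inner_le_norm (v - ξ) (T x₀ - x₀)]
    have h2 : (0:ℝ) ≤ ⟪ξ - x₀, T x₀ - x₀⟫ := by
      have hcc := halpern_coco T hT x₀ ξ
      rw [hξ, sub_self, sub_zero] at hcc
      have hrw : ⟪ξ - x₀, T x₀ - x₀⟫ = ⟪x₀ - T x₀, x₀ - ξ⟫ := by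
        rw [show ξ - x₀ = -(x₀ - ξ) by abel, show T x₀ - x₀ = -(x₀ - T x₀) by abel,
          inner_neg_neg, real_inner_comm]
      rw [hrw]
      nlinarith [sq_nonneg ‖x₀ - T x₀‖]
    have h3 : ‖v - ξ‖ * ‖T x₀ - x₀‖ ≤ 2*D₀^2 := by
      have := mul_le_mul hDv hq2 (norm_nonneg _) hD0
      nlinarith
    linarith
  have hpi : (9:ℝ) ≤ Real.pi^2 := by
    nlinarith [Real.pi_gt_three]
  have hpiD : (0:ℝ) ≤ (Real.pi^2 - 9)*D₀^2 :=
    mul_nonneg (by linarith) (sq_nonneg D₀)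
  set S : ℝ := 2*(6+Real.pi^2)/3 * D₀^2 + ‖v + T x₀ - (2:ℝ)•x₀‖^2 - ‖T x₀ - v‖^2 with hS
  have hSalt : S = 2*(6+Real.pi^2)/3 * D₀^2 + 4*⟪v - x₀, T x₀ - x₀⟫ := by
    rw [hS]; linarith [hS4]
  have hSge0 : 0 ≤ S := by
    rw [hSalt]; nlinarith [hpq, hpiD, sq_nonneg D₀]
  -- final computation
  intro k _
  have hKpos : (0:ℝ) < (k:ℝ)+2 := by positivity
  have h1 : (((k:ℝ)+2)^2/2)*‖x (k+1) - T (x (k+1))‖^2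
      - ((k:ℝ)+2)*‖v - ξ‖*‖x (k+1) - T (x (k+1))‖ ≤ ⟪x 0 - T (x 0), x 0 - v⟫ := by
    have h := hquad (k+1)
    push_cast at h
    linarith [h]
  have hsq : (((k:ℝ)+2)*‖x (k+1) - T (x (k+1))‖ - ‖v - ξ‖)^2
      ≤ 2*⟪x 0 - T (x 0), x 0 - v⟫ + ‖v - ξ‖^2 := by nlinarith [h1]
  have hkey2 : 2*⟪x 0 - T (x 0), x 0 - v⟫ + ‖v - ξ‖^2 ≤ S + (2*D₀ - ‖v - ξ‖)^2 := by
    rw [hC0', hSalt]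
    nlinarith [hpq, hpiD, mul_le_mul_of_nonneg_left hDv hD0, sq_nonneg D₀]
  have hc2 : 0 ≤ 2*D₀ - ‖v - ξ‖ := by linarith
  have hstep1 : ((k:ℝ)+2)*‖x (k+1) - T (x (k+1))‖ - ‖v - ξ‖
      ≤ Real.sqrt (S + (2*D₀ - ‖v - ξ‖)^2) := by
    calc ((k:ℝ)+2)*‖x (k+1) - T (x (k+1))‖ - ‖v - ξ‖
        ≤ |((k:ℝ)+2)*‖x (k+1) - T (x (k+1))‖ - ‖v - ξ‖| := le_abs_self _
      _ = Real.sqrt ((((k:ℝ)+2)*‖x (k+1) - T (x (k+1))‖ - ‖v - ξ‖)^2) :=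
          (Real.sqrt_sq_eq_abs _).symm
      _ ≤ _ := Real.sqrt_le_sqrt (by linarith [hsq, hkey2])
  have hstep2 : Real.sqrt (S + (2*D₀ - ‖v - ξ‖)^2) ≤ Real.sqrt S + (2*D₀ - ‖v - ξ‖) := by
    have hs := Real.sq_sqrt hSge0
    have hsn := Real.sqrt_nonneg S
    have hle : S + (2*D₀ - ‖v - ξ‖)^2 ≤ (Real.sqrt S + (2*D₀ - ‖v - ξ‖))^2 := by nlinarith
    calc Real.sqrt (S + (2*D₀ - ‖v - ξ‖)^2)
        ≤ Real.sqrt ((Real.sqrt S + (2*D₀ - ‖v - ξ‖))^2) := Real.sqrt_le_sqrt hle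
      _ = |Real.sqrt S + (2*D₀ - ‖v - ξ‖)| := Real.sqrt_sq_eq_abs _
      _ = Real.sqrt S + (2*D₀ - ‖v - ξ‖) := abs_of_nonneg (by linarith)
  have hfin : ((k:ℝ)+2)*‖x (k+1) - T (x (k+1))‖ ≤ Real.sqrt S + 2*D₀ := by linarith
  rw [show (1/((k:ℝ)+2)) * Real.sqrt S + 2*D₀/((k:ℝ)+2)
      = (Real.sqrt S + 2*D₀)/((k:ℝ)+2) by ring]
  rw [le_div_iff₀ hKpos]
  linarith [hfin, mul_comm ‖x (k+1) - T (x (k+1))‖ ((k:ℝ)+2)]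
end

section
/- Let A : H ⇒ H be maximally monotone, η > 0, and J = J_{ηA} := (Id + ηA)^{-1} its resolvent. Let y₀ = x_{−1} = x₀ ∈ H and define for k ≥ 0: y_{k+1} := J(x_k), x_{k+1} := y_{k+1} + (k/(k+2))(y_{k+1} − y_k) − (k/(k+2))(y_k − x_{k−1}) (Kim's accelerated proximal point method). Then for every k ≥ 0 the sequence {x_k} satisfies the Halpern-type recursion x_{k+1} = (1/(k+2)) x₀ + ((k+1)/(k+2)) (2 J(x_k) − x_k). -/
/-!
Multiplying the momentum recursion by `k + 2` gives
`(k+2) x_{k+1} = (2k+2) y_{k+1} - k (2 y_k - x_{k-1})`, while the Halpern form reads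
`(k+2) x_{k+1} = x₀ + (k+1) (2 y_{k+1} - x_k)`. The latter at index `k - 1` says
`k (2 y_k - x_{k-1}) = (k+1) x_k - x₀`, and substituting this into the former gives the latter
at index `k`; so the Halpern form propagates by induction from `x₁ = y₁`.
-/

section KimRecursion

variable {𝕜 E : Type*} [Field 𝕜] [CharZero 𝕜] [AddCommGroup E] [Module 𝕜 E]
  {x y : ℕ → E}

theorem kim_recursion_mul_cast_add_two
    (hx : ∀ k : ℕ, x (k+1) = y (k+1) + ((k:𝕜)/((k:𝕜)+2)) • (y (k+1) - y k)
        - ((k:𝕜)/((k:𝕜)+2)) • (y k - x (k-1))) (k : ℕ) :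
    ((k:𝕜) + 2) • x (k+1) = (2 * (k:𝕜) + 2) • y (k+1) - (k:𝕜) • ((2:𝕜) • y k - x (k-1)) := by
  have hk : (k:𝕜) + 2 ≠ 0 := by norm_cast
  rw [hx k]
  match_scalars <;> field_simp <;> ring

theorem kim_recursion_halpern_mul_cast_add_two {x₀ : E} (hx0 : x 0 = x₀)
    (hx : ∀ k : ℕ, x (k+1) = y (k+1) + ((k:𝕜)/((k:𝕜)+2)) • (y (k+1) - y k)
        - ((k:𝕜)/((k:𝕜)+2)) • (y k - x (k-1))) (k : ℕ) :
    ((k:𝕜) + 2) • x (k+1) = x₀ + ((k:𝕜) + 1) • ((2:𝕜) • y (k+1) - x k) := by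
  induction k with
  | zero =>
    rw [kim_recursion_mul_cast_add_two hx 0, hx0]
    match_scalars <;> norm_num
  | succ k ih =>
    rw [kim_recursion_mul_cast_add_two hx (k+1), Nat.add_sub_cancel]
    have hprev : ((k:𝕜) + 1) • ((2:𝕜) • y (k+1) - x k) = ((k:𝕜) + 2) • x (k+1) - x₀ := by
      rw [ih]; abel
    push_cast
    rw [hprev]
    match_scalars <;> ring

end KimRecursion

theorem stmt17_general {H : Type*} [NormedAddCommGroup H] [InnerProductSpace ℝ H]
    (J : H → H)
    (x₀ : H) (x y : ℕ → H)
    (hx0 : x 0 = x₀)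
    (hy : ∀ k, y (k+1) = J (x k))
    (hx : ∀ k, x (k+1) = y (k+1) + ((k:ℝ)/((k:ℝ)+2)) • (y (k+1) - y k)
        - ((k:ℝ)/((k:ℝ)+2)) • (y k - x (k-1))) :
    ∀ k, x (k+1) = (1/((k:ℝ)+2)) • x₀ + (((k:ℝ)+1)/((k:ℝ)+2)) • ((2:ℝ) • J (x k) - x k) := by
  intro k
  have hk : (k:ℝ) + 2 ≠ 0 := by positivity
  rw [one_div, div_eq_inv_mul, mul_smul, ← smul_add, eq_inv_smul_iff₀ hk, ← hy k]
  exact kim_recursion_halpern_mul_cast_add_two hx0 hx k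

theorem stmt17 {H : Type*} [NormedAddCommGroup H] [InnerProductSpace ℝ H]
    (J : H → H)
    (hJ : ∀ x y : H, ‖J x - J y‖^2 ≤ (inner ℝ (J x - J y) (x - y) : ℝ))
    (x₀ : H) (x y : ℕ → H)
    (hy0 : y 0 = x₀) (hx0 : x 0 = x₀)
    (hy : ∀ k, y (k+1) = J (x k))
    (hx : ∀ k, x (k+1) = y (k+1) + ((k:ℝ)/((k:ℝ)+2)) • (y (k+1) - y k)
        - ((k:ℝ)/((k:ℝ)+2)) • (y k - x (k-1))) :
    ∀ k, x (k+1) = (1/((k:ℝ)+2)) • x₀ + (((k:ℝ)+1)/((k:ℝ)+2)) • ((2:ℝ) • J (x k) - x k) :=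
  stmt17_general J x₀ x y hx0 hy hx
end

section
/- Let M : H → H be continuous and monotone, ε : [t₀,∞) → (0,∞) continuously differentiable, and x a solution of the Tikhonov-regularized flow ẋ(t) + M(x(t)) + ε(t)x(t) = 0 with x(t₀) = x₀. For ξ ∈ Zer M define φ_ξ(t) := (1/2)‖x(t) − ξ‖². Then for almost every t ≥ t₀: φ̇_ξ(t) + 2ε(t)φ_ξ(t) ≤ −ε(t)⟨x(t) − ξ, ξ⟩ ≤ ε(t)φ_ξ(t) + (ε(t)/2)‖ξ‖², and consequently ‖x(t) − ξ‖ ≤ max{‖x₀ − ξ‖, ‖ξ‖} for every t ≥ t₀, so the trajectory is bounded. -/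
open scoped InnerProductSpace

/-!
Monotonicity of `M` and `M ξ = 0` give `⟪M(x), x - ξ⟫ ≥ 0`, so differentiating
`φ_ξ = ½‖x - ξ‖²` along the flow yields `φ̇_ξ + 2εφ_ξ ≤ -ε⟪x - ξ, ξ⟫`, and Young's inequality
bounds the right-hand side by `εφ_ξ + (ε/2)‖ξ‖²`. Hence `φ̇_ξ ≤ (ε/2)(‖ξ‖² - ‖x - ξ‖²)`:
`φ_ξ` cannot increase while `‖x - ξ‖ > ‖ξ‖`, which traps the trajectory in the ball of radius
`max ‖x₀ - ξ‖ ‖ξ‖` around `ξ`.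
-/

theorem le_max_of_hasDerivAt_nonpos_of_lt {f f' : ℝ → ℝ} {a B : ℝ}
    (hf : ∀ t, a ≤ t → HasDerivAt f (f' t) t) (hf' : ∀ t, a ≤ t → B < f t → f' t ≤ 0)
    {t : ℝ} (ht : a ≤ t) : f t ≤ max (f a) B := by
  set C := max (f a) B
  -- Compare `f` with the barriers `C + δ (1 + s - a)`, which `f` can only touch strictly above `B`.
  have barrier : ∀ δ > 0, f t ≤ C + δ * (1 + (t - a)) := by
    intro δ hδ
    refine image_le_of_deriv_right_lt_deriv_boundary' (a := a) (b := t)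
      (B := fun s => C + δ * (1 + (s - a))) (B' := fun _ => δ) ?_
      (fun s hs => (hf s hs.1).hasDerivWithinAt) ?_ (by fun_prop) ?_ ?_ ⟨ht, le_rfl⟩
    · exact fun s hs => (hf s hs.1).continuousAt.continuousWithinAt
    · nlinarith [le_max_left (f a) B]
    · intro s _
      simpa using (((hasDerivAt_id s).sub_const a).const_add 1).const_mul δ |>.const_add C
        |>.hasDerivWithinAt
    · intro s hs hfs
      have hCB : B < f s := by rw [hfs]; nlinarith [le_max_right (f a) B, hs.1]
      exact (hf' s hs.1 hCB).trans_lt hδ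
  refine le_of_forall_pos_le_add fun η hη => ?_
  have hlen : 0 < 1 + (t - a) := by linarith
  simpa [div_mul_cancel₀ η hlen.ne'] using barrier (η / (1 + (t - a))) (by positivity)

theorem le_max_of_sq_le_max_sq {a b c : ℝ} (hb : 0 ≤ b) (hc : 0 ≤ c)
    (h : a ^ 2 ≤ max (b ^ 2) (c ^ 2)) : a ≤ max b c := by
  have hmax : max (b ^ 2) (c ^ 2) ≤ max b c ^ 2 :=
    max_le (pow_le_pow_left₀ hb (le_max_left b c) 2) (pow_le_pow_left₀ hc (le_max_right b c) 2)
  exact (abs_le_of_sq_le_sq' (h.trans hmax) (hb.trans (le_max_left b c))).2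

section

variable {H : Type*} [NormedAddCommGroup H] [InnerProductSpace ℝ H]

theorem hasDerivAt_half_norm_sub_sq {x : ℝ → H} {v : H} {t : ℝ} (ξ : H) (hx : HasDerivAt x v t) :
    HasDerivAt (fun s => (1 / 2 : ℝ) * ‖x s - ξ‖ ^ 2) ⟪v, x t - ξ⟫_ℝ t := by
  refine (((hx.sub_const ξ).norm_sq).const_mul (1 / 2 : ℝ)).congr_deriv ?_
  rw [real_inner_comm]
  ring

theorem inner_neg_sub_smul_add_le {m y ξ : H} (e : ℝ) (hm : 0 ≤ ⟪m, y - ξ⟫_ℝ) :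
    ⟪-m - e • y, y - ξ⟫_ℝ + e * ‖y - ξ‖ ^ 2 ≤ -e * ⟪y - ξ, ξ⟫_ℝ := by
  have hy : ⟪y, y - ξ⟫_ℝ = ‖y - ξ‖ ^ 2 + ⟪y - ξ, ξ⟫_ℝ := by
    rw [← real_inner_self_eq_norm_sq, real_inner_comm ξ, ← inner_add_left, sub_add_cancel]
  rw [inner_sub_left, inner_neg_left, real_inner_smul_left, hy]
  linarith

theorem neg_inner_le_half_norm_sq_add (u v : H) :
    -⟪u, v⟫_ℝ ≤ (1 / 2) * ‖u‖ ^ 2 + (1 / 2) * ‖v‖ ^ 2 := by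
  nlinarith [norm_add_sq_real u v, sq_nonneg ‖u + v‖]

end

theorem stmt19_general {H : Type*} [NormedAddCommGroup H] [InnerProductSpace ℝ H]
    (M : H → H)
    (hM : ∀ x y : H, 0 ≤ (inner ℝ (M x - M y) (x - y) : ℝ))
    (t₀ : ℝ) (ε : ℝ → ℝ) (hεpos : ∀ t, t₀ ≤ t → 0 < ε t)
    (x₀ : H) (x : ℝ → H) (hx0 : x t₀ = x₀)
    (hx : ∀ t, t₀ ≤ t → HasDerivAt x (-(M (x t)) - ε t • x t) t)
    (ξ : H) (hξ : M ξ = 0) :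
    (∀ t, t₀ ≤ t →
      deriv (fun s => (1/2 : ℝ) * ‖x s - ξ‖^2) t + 2 * ε t * ((1/2) * ‖x t - ξ‖^2)
          ≤ -(ε t) * (inner ℝ (x t - ξ) ξ : ℝ) ∧
      -(ε t) * (inner ℝ (x t - ξ) ξ : ℝ) ≤ ε t * ((1/2) * ‖x t - ξ‖^2) + (ε t / 2) * ‖ξ‖^2) ∧
    (∀ t, t₀ ≤ t → ‖x t - ξ‖ ≤ max ‖x₀ - ξ‖ ‖ξ‖) := by
  have hφ t (ht : t₀ ≤ t) := hasDerivAt_half_norm_sub_sq ξ (hx t ht)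
  have hdecay t (ht : t₀ ≤ t) :
      ⟪-(M (x t)) - ε t • x t, x t - ξ⟫_ℝ + 2 * ε t * ((1 / 2) * ‖x t - ξ‖ ^ 2)
        ≤ -(ε t) * ⟪x t - ξ, ξ⟫_ℝ := by
    have hmono : 0 ≤ ⟪M (x t), x t - ξ⟫_ℝ := by simpa [hξ] using hM (x t) ξ
    linarith [inner_neg_sub_smul_add_le (ε t) hmono]
  have hyoung t (ht : t₀ ≤ t) :
      -(ε t) * ⟪x t - ξ, ξ⟫_ℝ ≤ ε t * ((1 / 2) * ‖x t - ξ‖ ^ 2) + (ε t / 2) * ‖ξ‖ ^ 2 := by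
    nlinarith [mul_le_mul_of_nonneg_left (neg_inner_le_half_norm_sq_add (x t - ξ) ξ)
      (hεpos t ht).le]
  refine ⟨fun t ht => ⟨(hφ t ht).deriv ▸ hdecay t ht, hyoung t ht⟩, fun t ht => ?_⟩
  have hsq := le_max_of_hasDerivAt_nonpos_of_lt (B := (1 / 2) * ‖ξ‖ ^ 2) hφ
    (fun s hs hlt => by nlinarith [hdecay s hs, hyoung s hs, hεpos s hs]) ht
  rw [hx0, ← mul_max_of_nonneg _ _ (by norm_num)] at hsq
  exact le_max_of_sq_le_max_sq (norm_nonneg _) (norm_nonneg _) (by linarith)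

theorem stmt19 {H : Type*} [NormedAddCommGroup H] [InnerProductSpace ℝ H]
    (M : H → H) (hMc : Continuous M)
    (hM : ∀ x y : H, 0 ≤ (inner ℝ (M x - M y) (x - y) : ℝ))
    (t₀ : ℝ) (ε : ℝ → ℝ) (hεpos : ∀ t, t₀ ≤ t → 0 < ε t) (hε : ContDiff ℝ 1 ε)
    (x₀ : H) (x : ℝ → H) (hx0 : x t₀ = x₀)
    (hx : ∀ t, t₀ ≤ t → HasDerivAt x (-(M (x t)) - ε t • x t) t)
    (ξ : H) (hξ : M ξ = 0) :
    (∀ t, t₀ ≤ t →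
      deriv (fun s => (1/2 : ℝ) * ‖x s - ξ‖^2) t + 2 * ε t * ((1/2) * ‖x t - ξ‖^2)
          ≤ -(ε t) * (inner ℝ (x t - ξ) ξ : ℝ) ∧
      -(ε t) * (inner ℝ (x t - ξ) ξ : ℝ) ≤ ε t * ((1/2) * ‖x t - ξ‖^2) + (ε t / 2) * ‖ξ‖^2) ∧
    (∀ t, t₀ ≤ t → ‖x t - ξ‖ ≤ max ‖x₀ - ξ‖ ‖ξ‖) :=
  stmt19_general M hM t₀ ε hεpos x₀ x hx0 hx ξ hξ
end
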